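/- arXiv:2508.00601 — 7 statements merged into one kernel-verified Lean document; each statement's English description precedes it below -/
import Mathlib

section
/- Let (x₀, x₁, x₂) = (a_{n,j}, a_{n,j+1}, a_{n,j+2}) be a triple in X_n, with labels w₁ = β^n(x₁ − x₀) and w₂ = β^n(x₂ − x₁), and let (x₀, z₁, z₂, z₃) be four consecutive points of X_{n+1} (so z₁, z₂, z₃ are the three points of X_{n+1} immediately following x₀). If w₁ ≠ d_m and w₂ ≠ d_m, then W_{n+1}(z₁) = p₂·W_n(x₀), W_{n+1}(z₂) = p₁·W_n(x₁), and W_{n+1}(z₃) = p₂·W_n(x₁). -/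
open MeasureTheory

noncomputable section

/-- The contraction maps: `Smap β 0 = S₁ : x ↦ x/β` and `Smap β 1 = S₂ : x ↦ x/β + (1 - 1/β)`. -/
def Smap (β : ℝ) (i : Fin 2) (x : ℝ) : ℝ :=
  if i = 0 then x / β else x / β + (1 - 1 / β)

/-- `Sapply β I = S_I = S_{i₁} ∘ ⋯ ∘ S_{i_n}` for a word `I = i₁…i_n ∈ {1,2}^n`. -/
def Sapply (β : ℝ) : {n : ℕ} → (Fin n → Fin 2) → ℝ → ℝ
  | 0, _, x => x
  | _+1, I, x => Smap β (I 0) (Sapply β (fun k => I k.succ) x)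

/-- `Xn β n = {S_I(0) : I ∈ {1,2}^n} ∪ {1}`. -/
def Xn (β : ℝ) (n : ℕ) : Finset ℝ :=
  (Finset.univ.image fun I : Fin n → Fin 2 => Sapply β I 0) ∪ {1}

/-- `pt β n j = a_{n,j}`, the `j`-th element of `Xn β n` in increasing order
(junk value `0` if `j` is out of range). -/
def pt (β : ℝ) (n j : ℕ) : ℝ := ((Xn β n).sort (· ≤ ·)).getD j 0

/-- The sequence `d₀ = 1`, `d₁ = β - 1`, `d_{j+1} = β·d_j - d₁`. -/
def dd (β : ℝ) : ℕ → ℝ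
  | 0 => 1
  | 1 => β - 1
  | j+2 => β * dd β (j+1) - (β - 1)

/-- The weight of a letter: `pw p₁ p₂ i = p_{i+1}`. -/
def pw (p1 p2 : ℝ) (i : Fin 2) : ℝ := if i = 0 then p1 else p2

/-- `Wn β p₁ p₂ n x = W_n(x) = ∑_{S_I(0)=x, |I|=n} p_I`. -/
def Wn (β p1 p2 : ℝ) (n : ℕ) (x : ℝ) : ℝ :=
  ∑ I : Fin n → Fin 2, if Sapply β I 0 = x then ∏ k, pw p1 p2 (I k) else 0

/-- A measure with support `[0,1]` is doubling if
`sup { μ(B(x,2r))/μ(B(x,r)) : x ∈ supp μ = [0,1], r > 0 } < ∞`. -/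
def IsDoubling (μ : Measure ℝ) : Prop :=
  (⨆ (x : ℝ) (_ : x ∈ Set.Icc (0:ℝ) 1) (r : ℝ) (_ : 0 < r),
    μ (Metric.closedBall x (2 * r)) / μ (Metric.closedBall x r)) < ⊤


namespace Stmt10Aux

/-- The set of level-`n` points without the extra point `1`. -/
def Yn (β : ℝ) (n : ℕ) : Finset ℝ :=
  Finset.univ.image fun I : Fin n → Fin 2 => Sapply β I 0

lemma mem_Yn {β x : ℝ} {n : ℕ} :
    x ∈ Yn β n ↔ ∃ I : Fin n → Fin 2, Sapply β I 0 = x := by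
  simp [Yn]

lemma Xn_eq (β : ℝ) (n : ℕ) : Xn β n = Yn β n ∪ {1} := rfl

lemma mem_Xn_iff {β x : ℝ} {n : ℕ} : x ∈ Xn β n ↔ x ∈ Yn β n ∨ x = 1 := by
  rw [Xn_eq, Finset.mem_union, Finset.mem_singleton]

lemma Yn_subset_Xn (β : ℝ) (n : ℕ) : Yn β n ⊆ Xn β n := Finset.subset_union_left

lemma fin2cases (i : Fin 2) : i = 0 ∨ i = 1 := by revert i; decide

lemma Smap_zero (β x : ℝ) : Smap β 0 x = x / β := if_pos rfl

lemma Smap_one (β x : ℝ) : Smap β 1 x = x / β + (1 - 1 / β) := by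
  simp [Smap]

lemma pw_zero (p1 p2 : ℝ) : pw p1 p2 0 = p1 := if_pos rfl

lemma pw_one (p1 p2 : ℝ) : pw p1 p2 1 = p2 := by simp [pw]

lemma Smap_add (β : ℝ) : ∀ (ii : Fin 2) (u v : ℝ), Smap β ii (u + v) = Smap β ii u + v / β := by
  intro ii u v
  rcases fin2cases ii with h | h <;> subst h <;>
    simp [Smap_zero, Smap_one, add_div] <;> ring

lemma sapply_affine (β : ℝ) : ∀ {n : ℕ} (I : Fin n → Fin 2) (x : ℝ),
    Sapply β I x = Sapply β I 0 + x / β ^ n := by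
  intro n
  induction n with
  | zero => intro I x; simp [Sapply]
  | succ n ih =>
      intro I x
      show Smap β (I 0) (Sapply β (fun k => I k.succ) x)
        = Smap β (I 0) (Sapply β (fun k => I k.succ) 0) + x / β ^ (n+1)
      rw [ih (fun k => I k.succ) x, Smap_add β, div_div, ← pow_succ]

lemma sapply_succ (β : ℝ) : ∀ {n : ℕ} (I : Fin (n+1) → Fin 2) (x : ℝ),
    Sapply β I x = Sapply β (fun k : Fin n => I k.castSucc) (Smap β (I (Fin.last n)) x) := by
  intro n
  induction n with
  | zero =>
      intro I x
      show Smap β (I 0) (Sapply β (fun k => I k.succ) x) = _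
      have h0 : Fin.last 0 = (0 : Fin 1) := rfl
      simp [Sapply, h0]
  | succ n ih =>
      intro I x
      show Smap β (I 0) (Sapply β (fun k => I k.succ) x) = _
      rw [ih (fun k => I k.succ) x]
      show _ = Smap β (I (Fin.castSucc 0))
        (Sapply β (fun k : Fin n => I (k.succ.castSucc)) (Smap β (I (Fin.last (n+1))) x))
      simp only [Fin.castSucc_zero, ← Fin.succ_castSucc, Fin.succ_last]

lemma sapply_snoc (β : ℝ) {n : ℕ} (J : Fin n → Fin 2) (i : Fin 2) :
    Sapply β (Fin.snoc J i) 0 = Sapply β J 0 + (Smap β i 0) / β ^ n := by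
  rw [sapply_succ]
  have h1 : (fun k : Fin n => (Fin.snoc J i : Fin (n+1) → Fin 2) k.castSucc) = J := by
    funext k; exact Fin.snoc_castSucc _ _ _
  have h2 : (Fin.snoc J i : Fin (n+1) → Fin 2) (Fin.last n) = i := Fin.snoc_last _ _
  rw [h1, h2, sapply_affine]

/-- The snoc equivalence for words. -/
def snocE (n : ℕ) : (Fin n → Fin 2) × Fin 2 ≃ (Fin (n+1) → Fin 2) where
  toFun p := Fin.snoc p.1 p.2
  invFun I := (fun k => I k.castSucc, I (Fin.last n))
  left_inv p := by
    obtain ⟨J, i⟩ := p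
    refine Prod.ext ?_ ?_
    · show (fun k : Fin n => (Fin.snoc J i : Fin (n+1) → Fin 2) k.castSucc) = J
      funext k; exact Fin.snoc_castSucc _ _ _
    · show (Fin.snoc J i : Fin (n+1) → Fin 2) (Fin.last n) = i
      exact Fin.snoc_last _ _
  right_inv I := Fin.snoc_init_self I

lemma Xn_succ {β : ℝ} (n : ℕ) :
    Xn β (n+1) = Xn β n ∪ (Yn β n).image (· + (1 - 1/β) / β ^ n) := by
  ext z
  simp only [mem_Xn_iff, Finset.mem_union, Finset.mem_image, mem_Yn]
  constructor
  · rintro (⟨I, rfl⟩ | rfl)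
    · rcases fin2cases (I (Fin.last n)) with h | h
      · left; left
        refine ⟨fun k => I k.castSucc, ?_⟩
        rw [sapply_succ β I 0, h, Smap_zero, zero_div]
      · right
        refine ⟨Sapply β (fun k => I k.castSucc) 0, ⟨fun k => I k.castSucc, rfl⟩, ?_⟩
        rw [sapply_succ β I 0, h, Smap_one, sapply_affine β _ (0/β + (1 - 1/β))]
        norm_num
    · left; right; rfl
  · rintro ((⟨J, rfl⟩ | rfl) | ⟨y, ⟨J, rfl⟩, rfl⟩)
    · left
      refine ⟨Fin.snoc J 0, ?_⟩
      rw [sapply_snoc, Smap_zero]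
      norm_num
    · right; rfl
    · left
      refine ⟨Fin.snoc J 1, ?_⟩
      rw [sapply_snoc, Smap_one]
      norm_num

lemma Xn_subset_Xn_succ {β : ℝ} (n : ℕ) : Xn β n ⊆ Xn β (n+1) := by
  rw [Xn_succ]; exact Finset.subset_union_left

lemma add_mem_Xn_succ {β x : ℝ} {n : ℕ} (hx : x ∈ Yn β n) :
    x + (1 - 1/β) / β ^ n ∈ Xn β (n+1) := by
  rw [Xn_succ]
  exact Finset.mem_union_right _ (Finset.mem_image_of_mem _ hx)

lemma mem_Xn_succ_iff {β z : ℝ} {n : ℕ} :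
    z ∈ Xn β (n+1) ↔ z ∈ Xn β n ∨ ∃ y ∈ Yn β n, z = y + (1 - 1/β) / β ^ n := by
  rw [Xn_succ, Finset.mem_union, Finset.mem_image]
  constructor
  · rintro (h | ⟨y, hy, rfl⟩)
    · exact Or.inl h
    · exact Or.inr ⟨y, hy, rfl⟩
  · rintro (h | ⟨y, hy, rfl⟩)
    · exact Or.inl h
    · exact Or.inr ⟨y, hy, rfl⟩

lemma Wn_succ (β p1 p2 : ℝ) (n : ℕ) (z : ℝ) :
    Wn β p1 p2 (n+1) z
      = p1 * Wn β p1 p2 n z + p2 * Wn β p1 p2 n (z - (1 - 1/β) / β ^ n) := by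
  have hre : Wn β p1 p2 (n+1) z
      = ∑ p : (Fin n → Fin 2) × Fin 2,
          (if Sapply β (Fin.snoc p.1 p.2 : Fin (n+1) → Fin 2) 0 = z
            then ∏ k, pw p1 p2 ((Fin.snoc p.1 p.2 : Fin (n+1) → Fin 2) k) else 0) := by
    rw [Wn]
    exact (Equiv.sum_comp (snocE n)
      (fun I => if Sapply β I 0 = z then ∏ k, pw p1 p2 (I k) else 0)).symm
  rw [hre, Fintype.sum_prod_type]
  have hterm : ∀ (J : Fin n → Fin 2) (i : Fin 2),
      (if Sapply β (Fin.snoc J i : Fin (n+1) → Fin 2) 0 = z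
        then ∏ k, pw p1 p2 ((Fin.snoc J i : Fin (n+1) → Fin 2) k) else 0)
        = (if Sapply β J 0 + (Smap β i 0) / β ^ n = z
            then (∏ k, pw p1 p2 (J k)) * pw p1 p2 i else 0) := by
    intro J i
    rw [sapply_snoc]
    congr 1
    rw [Fin.prod_univ_castSucc]
    simp [Fin.snoc_castSucc, Fin.snoc_last]
  have hsum : ∀ J : Fin n → Fin 2,
      (∑ i : Fin 2, if Sapply β (Fin.snoc J i : Fin (n+1) → Fin 2) 0 = z
          then ∏ k, pw p1 p2 ((Fin.snoc J i : Fin (n+1) → Fin 2) k) else 0)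
        = (if Sapply β J 0 = z then (∏ k, pw p1 p2 (J k)) else 0) * p1
          + (if Sapply β J 0 = z - (1 - 1/β)/β^n then (∏ k, pw p1 p2 (J k)) else 0) * p2 := by
    intro J
    rw [Fin.sum_univ_two, hterm J 0, hterm J 1]
    rw [Smap_zero, Smap_one, zero_div, zero_div, add_zero, zero_add]
    rw [ite_mul, ite_mul, zero_mul, zero_mul, pw_zero, pw_one]
    congr 2
    rw [eq_comm, eq_sub_iff_add_eq, eq_comm]
  rw [Finset.sum_congr rfl (fun J _ => hsum J), Finset.sum_add_distrib, Wn, Wn,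
    ← Finset.sum_mul, ← Finset.sum_mul]
  ring

lemma Wn_eq_zero {β : ℝ} (p1 p2 : ℝ) {n : ℕ} {x : ℝ} (hx : x ∉ Xn β n) :
    Wn β p1 p2 n x = 0 := by
  rw [Wn]
  refine Finset.sum_eq_zero fun I _ => ?_
  rw [if_neg]
  intro h
  exact hx (mem_Xn_iff.2 (Or.inl (mem_Yn.2 ⟨I, h⟩)))

lemma sapply_mem_Icc {β : ℝ} (hβ1 : 1 < β) :
    ∀ {n : ℕ} (I : Fin n → Fin 2) {x : ℝ}, 0 ≤ x → x ≤ 1 →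
      0 ≤ Sapply β I x ∧ Sapply β I x ≤ 1 := by
  have hβ0 : (0:ℝ) < β := lt_trans one_pos hβ1
  intro n
  induction n with
  | zero => intro I x h0 h1; exact ⟨h0, h1⟩
  | succ n ih =>
      intro I x h0 h1
      obtain ⟨hy0, hy1⟩ := ih (fun k => I k.succ) h0 h1
      show 0 ≤ Smap β (I 0) _ ∧ Smap β (I 0) _ ≤ 1
      set y := Sapply β (fun k => I k.succ) x with hy
      have hb1 : 1 / β ≤ 1 := by
        rw [div_le_one hβ0]; linarith
      have hb0 : 0 < 1 / β := by positivity
      have hyb : y / β ≤ 1 / β := div_le_div_of_nonneg_right hy1 (le_of_lt hβ0)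
      have hyb0 : 0 ≤ y / β := by positivity
      rcases fin2cases (I 0) with h | h <;> rw [h]
      · rw [Smap_zero]
        exact ⟨hyb0, le_trans hyb hb1⟩
      · rw [Smap_one]
        constructor
        · linarith
        · linarith

lemma mem_Xn_le_one {β x : ℝ} (hβ1 : 1 < β) {n : ℕ} (hx : x ∈ Xn β n) : x ≤ 1 := by
  rcases mem_Xn_iff.1 hx with h | rfl
  · obtain ⟨I, rfl⟩ := mem_Yn.1 h
    exact (sapply_mem_Icc hβ1 I le_rfl zero_le_one).2
  · exact le_rfl

/- ### facts about the sequence d -/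

section Dfacts

variable {m : ℕ} {β : ℝ}

lemma dd_zero (β : ℝ) : dd β 0 = 1 := rfl
lemma dd_one (β : ℝ) : dd β 1 = β - 1 := rfl
lemma dd_step (β : ℝ) (i : ℕ) : dd β (i+2) = β * dd β (i+1) - (β - 1) := rfl

lemma dd_formula (β : ℝ) : ∀ i : ℕ, dd β (i+1) = 1 + β ^ i * (β - 2) := by
  intro i
  induction i with
  | zero => rw [pow_zero, dd_one]; ring
  | succ i ih => rw [dd_step, ih, pow_succ]; ring

lemma beta_key (hβ1 : 1 < β)
    (hβ : β ^ m = ∑ j ∈ Finset.range m, β ^ j) : β ^ m * (2 - β) = 1 := by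
  have hne : β - 1 ≠ 0 := sub_ne_zero.2 (ne_of_gt hβ1)
  have h1 : β ^ m * (β - 1) = β ^ m - 1 := by
    have h := hβ
    rw [geom_sum_eq (ne_of_gt hβ1) m, eq_div_iff hne] at h
    exact h
  linear_combination -h1

lemma dd_m_eq (hm : 1 ≤ m) (hβ1 : 1 < β)
    (hβ : β ^ m = ∑ j ∈ Finset.range m, β ^ j) : dd β m = 1 - 1/β := by
  have hβ0 : (0:ℝ) < β := lt_trans one_pos hβ1
  have hβne : β ≠ 0 := ne_of_gt hβ0
  obtain ⟨m', rfl⟩ : ∃ m', m = m' + 1 := ⟨m - 1, by omega⟩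
  rw [dd_formula]
  have hk : β ^ (m'+1) * (2 - β) = 1 := beta_key hβ1 hβ
  have h5 : β ^ m' * (2 - β) = 1 / β := by
    rw [pow_succ] at hk
    rw [eq_div_iff hβne]
    linear_combination hk
  linear_combination -h5

lemma dd_m_pos (hm : 1 ≤ m) (hβ1 : 1 < β)
    (hβ : β ^ m = ∑ j ∈ Finset.range m, β ^ j) : 0 < dd β m := by
  rw [dd_m_eq hm hβ1 hβ]
  have hβ0 : (0:ℝ) < β := lt_trans one_pos hβ1
  have : 1 / β < 1 := by rw [div_lt_one hβ0]; exact hβ1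
  linarith

lemma dd_m_lt (hm : 1 ≤ m) (hβ1 : 1 < β) (hβ2 : β < 2)
    (hβ : β ^ m = ∑ j ∈ Finset.range m, β ^ j) {i : ℕ} (hi : i < m) :
    dd β m < dd β i := by
  have hβ0 : (0:ℝ) < β := lt_trans one_pos hβ1
  rcases i with _ | i'
  · rw [dd_zero, dd_m_eq hm hβ1 hβ]
    have : 0 < 1 / β := by positivity
    linarith
  · obtain ⟨m', rfl⟩ : ∃ m', m = m' + 1 := ⟨m - 1, by omega⟩
    rw [dd_formula, dd_formula]
    have hpow : β ^ i' < β ^ m' := pow_lt_pow_right₀ hβ1 (by omega)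
    nlinarith

lemma dd_m_le (hm : 1 ≤ m) (hβ1 : 1 < β) (hβ2 : β < 2)
    (hβ : β ^ m = ∑ j ∈ Finset.range m, β ^ j) {i : ℕ} (hi : i ≤ m) :
    dd β m ≤ dd β i := by
  rcases eq_or_lt_of_le hi with rfl | h
  · exact le_rfl
  · exact le_of_lt (dd_m_lt hm hβ1 hβ2 hβ h)

end Dfacts

/- ### the gap lemma -/

/-- No element of `s` strictly between `a` and `b`. -/
def NoBetween (s : Finset ℝ) (a b : ℝ) : Prop := ∀ c ∈ s, ¬(a < c ∧ c < b)

section Gaps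

variable {m : ℕ} {β : ℝ}

/-- The statement `G n`: consecutive gaps of `Xn β n` are of the form `dd β i / β ^ n`. -/
def GapProp (m : ℕ) (β : ℝ) (n : ℕ) : Prop :=
  ∀ a b : ℝ, a ∈ Xn β n → b ∈ Xn β n → a < b → NoBetween (Xn β n) a b →
    ∃ i ≤ m, b - a = dd β i / β ^ n

lemma min_gap (hm : 1 ≤ m) (hβ1 : 1 < β) (hβ2 : β < 2)
    (hβ : β ^ m = ∑ j ∈ Finset.range m, β ^ j) {n : ℕ} (hG : GapProp m β n)
    {a b : ℝ} (ha : a ∈ Xn β n) (hb : b ∈ Xn β n) (hab : a < b) :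
    dd β m / β ^ n ≤ b - a := by
  have hβ0 : (0:ℝ) < β := lt_trans one_pos hβ1
  have hpn : (0:ℝ) < β ^ n := pow_pos hβ0 n
  set T := (Xn β n).filter (a < ·) with hT
  have hbT : b ∈ T := Finset.mem_filter.2 ⟨hb, hab⟩
  have hTne : T.Nonempty := ⟨b, hbT⟩
  set v := T.min' hTne with hv
  have hvT : v ∈ T := T.min'_mem hTne
  have hvX : v ∈ Xn β n := (Finset.mem_filter.1 hvT).1
  have hav : a < v := (Finset.mem_filter.1 hvT).2
  have hnb : NoBetween (Xn β n) a v := by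
    intro c hc hcc
    obtain ⟨h1, h2⟩ := hcc
    have : c ∈ T := Finset.mem_filter.2 ⟨hc, h1⟩
    exact absurd (T.min'_le c this) (not_le.2 h2)
  obtain ⟨i, hi, hgap⟩ := hG a v ha hvX hav hnb
  have h1 : dd β m / β ^ n ≤ dd β i / β ^ n :=
    div_le_div_of_nonneg_right (dd_m_le hm hβ1 hβ2 hβ hi) (le_of_lt hpn)
  have h2 : v ≤ b := T.min'_le b hbT
  linarith [hgap, h1, h2]

lemma delta_eq (hβ1 : 1 < β) (n : ℕ) : (1 - 1/β) / β ^ n = (β - 1) / β ^ (n+1) := by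
  have hβ0 : (0:ℝ) < β := lt_trans one_pos hβ1
  have h : (1 - 1/β : ℝ) = (β - 1)/β := by field_simp
  rw [h, div_div, pow_succ, mul_comm]

lemma gaps (hm : 1 ≤ m) (hβ1 : 1 < β) (hβ2 : β < 2)
    (hβ : β ^ m = ∑ j ∈ Finset.range m, β ^ j) : ∀ n, GapProp m β n := by
  have hβ0 : (0:ℝ) < β := lt_trans one_pos hβ1
  intro n
  induction n with
  | zero =>
      intro a b ha hb hab _
      have hX0 : Xn β 0 = {0, 1} := by
        rw [Xn_eq]
        have hY : Yn β 0 = {0} := by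
          rw [Yn]
          apply Finset.eq_singleton_iff_unique_mem.2
          constructor
          · exact Finset.mem_image_of_mem _ (Finset.mem_univ default)
          · intro x hx
            obtain ⟨I, _, h⟩ := Finset.mem_image.1 hx
            exact h.symm
        rw [hY]; rfl
      rw [hX0] at ha hb
      simp only [Finset.mem_insert, Finset.mem_singleton] at ha hb
      refine ⟨0, Nat.zero_le m, ?_⟩
      rcases ha with rfl | rfl <;> rcases hb with rfl | rfl <;>
        first
          | (exfalso; linarith)
          | (rw [dd_zero]; norm_num)
  | succ n ih =>
      intro a b ha hb hab hnb
      set δ : ℝ := (1 - 1/β) / β ^ n with hδ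
      have hδ_eq : dd β m / β ^ n = δ := by rw [dd_m_eq hm hβ1 hβ]
      have hpn : (0:ℝ) < β ^ n := pow_pos hβ0 n
      have hpn1 : (0:ℝ) < β ^ (n+1) := pow_pos hβ0 (n+1)
      have hδpos : 0 < δ := by
        rw [← hδ_eq]
        exact div_pos (dd_m_pos hm hβ1 hβ) hpn
      have hδ' : δ = (β - 1)/β^(n+1) := delta_eq hβ1 n
      have hb1 : b ≤ 1 := mem_Xn_le_one hβ1 hb
      have ha1 : a < 1 := lt_of_lt_of_le hab hb1
      by_cases haX : a ∈ Xn β n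
      · -- Case A : a ∈ Xn β n, then b = a + δ
        have haY : a ∈ Yn β n := by
          rcases mem_Xn_iff.1 haX with h | h
          · exact h
          · exact absurd h (ne_of_lt ha1)
        have haδ : a + δ ∈ Xn β (n+1) := add_mem_Xn_succ haY
        have hble : b ≤ a + δ := by
          by_contra h
          push_neg at h
          exact hnb (a + δ) haδ ⟨by linarith, h⟩
        have hbeq : b = a + δ := by
          rcases eq_or_lt_of_le hble with h | h
          · exact h
          · exfalso
            rcases mem_Xn_succ_iff.1 hb with hbX | ⟨y, hyY, rfl⟩
            · have := min_gap hm hβ1 hβ2 hβ ih haX hbX hab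
              rw [hδ_eq] at this
              linarith
            · have hyX : y ∈ Xn β n := Yn_subset_Xn β n hyY
              have hy_lt : y < a := by linarith
              have := min_gap hm hβ1 hβ2 hβ ih hyX haX hy_lt
              rw [hδ_eq] at this
              linarith
        refine ⟨1, by omega, ?_⟩
        rw [hbeq, add_sub_cancel_left, hδ', dd_one]
      · -- Case B : a = c + δ with c ∈ Yn β n
        rcases mem_Xn_succ_iff.1 ha with haX' | ⟨c, hcY, haeq⟩
        · exact absurd haX' haX
        subst haeq
        have hcX : c ∈ Xn β n := Yn_subset_Xn β n hcY
        have hc1 : c < 1 := by linarith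
        -- the successor e of c in Xn β n
        set T := (Xn β n).filter (c < ·) with hT
        have h1T : (1:ℝ) ∈ T := Finset.mem_filter.2 ⟨mem_Xn_iff.2 (Or.inr rfl), hc1⟩
        have hTne : T.Nonempty := ⟨1, h1T⟩
        set e := T.min' hTne with he
        have heT : e ∈ T := T.min'_mem hTne
        have heX : e ∈ Xn β n := (Finset.mem_filter.1 heT).1
        have hce : c < e := (Finset.mem_filter.1 heT).2
        have hnbce : NoBetween (Xn β n) c e := by
          intro x hx hxx
          obtain ⟨h1, h2⟩ := hxx
          exact absurd (T.min'_le x (Finset.mem_filter.2 ⟨hx, h1⟩)) (not_le.2 h2)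
        obtain ⟨i, hi, hgap⟩ := ih c e hcX heX hce hnbce
        have hstep : dd β m / β ^ n ≤ dd β i / β ^ n :=
          div_le_div_of_nonneg_right (dd_m_le hm hβ1 hβ2 hβ hi) (le_of_lt hpn)
        have hae : c + δ ≤ e := by
          rw [hδ_eq] at hstep
          linarith [hgap]
        have hae' : c + δ < e := by
          rcases eq_or_lt_of_le hae with h | h
          · exact absurd (h ▸ heX) haX
          · exact h
        have hbe : b ≤ e := by
          by_contra h
          push_neg at h
          exact hnb e (Xn_subset_Xn_succ n heX) ⟨hae', h⟩
        have hb_eq : b = e := by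
          rcases eq_or_lt_of_le hbe with h | h
          · exact h
          · exfalso
            rcases mem_Xn_succ_iff.1 hb with hbX | ⟨y, hyY, rfl⟩
            · exact hnbce b hbX ⟨by linarith, h⟩
            · have hyX : y ∈ Xn β n := Yn_subset_Xn β n hyY
              refine hnbce y hyX ⟨by linarith, by linarith⟩
        have him : i ≠ m := by
          intro h
          subst h
          rw [hδ_eq] at hgap
          linarith
        have key : dd β i / β^n - δ = (β * dd β i - (β-1))/β^(n+1) := by
          rw [hδ', pow_succ]
          field_simp
        have hba : b - (c + δ) = (β * dd β i - (β - 1)) / β ^ (n+1) := by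
          rw [hb_eq]
          have h9 : e - (c + δ) = (e - c) - δ := by ring
          rw [h9, hgap, key]
        rcases i with _ | i'
        · refine ⟨0, Nat.zero_le m, ?_⟩
          rw [hba, dd_zero]
          norm_num
        · refine ⟨i'+2, by omega, ?_⟩
          rw [hba, dd_step]

end Gaps

/- ### sorted-list machinery for `pt` -/

section Pt

variable {β : ℝ} {n : ℕ}

lemma pt_get {j : ℕ} (h : j < (Xn β n).card) :
    pt β n j = ((Xn β n).sort (· ≤ ·)).get
      ⟨j, by rw [Finset.length_sort]; exact h⟩ := by
  rw [pt, List.get_eq_getElem,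
    List.getD_eq_getElem _ _ (by rw [Finset.length_sort]; exact h)]

lemma pt_mem {j : ℕ} (h : j < (Xn β n).card) : pt β n j ∈ Xn β n := by
  rw [pt_get h]
  exact (Finset.mem_sort _).1 (List.get_mem _ _)

lemma pt_lt_pt {j j' : ℕ} (hjj : j < j') (h : j' < (Xn β n).card) :
    pt β n j < pt β n j' := by
  rw [pt_get (lt_trans hjj h), pt_get h]
  exact (Finset.sortedLT_sort (Xn β n)).strictMono_get (Fin.mk_lt_mk.2 hjj)

lemma pt_noBetween {j : ℕ} (h : j + 1 < (Xn β n).card) :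
    NoBetween (Xn β n) (pt β n j) (pt β n (j+1)) := by
  intro c hc hcc
  obtain ⟨h1, h2⟩ := hcc
  have hcmem : c ∈ (Xn β n).sort (· ≤ ·) := (Finset.mem_sort _).2 hc
  obtain ⟨i, hi⟩ := List.mem_iff_get.1 hcmem
  rw [pt_get (by omega)] at h1
  rw [pt_get h] at h2
  rw [← hi] at h1 h2
  have s := (Finset.sortedLT_sort (Xn β n)).strictMono_get
  have hji : j < (i : ℕ) := s.lt_iff_lt.1 h1
  have hij : (i : ℕ) < j + 1 := s.lt_iff_lt.1 h2
  omega

lemma pt_not_mem_between {j : ℕ} (h : j + 1 < (Xn β n).card) {x : ℝ}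
    (h1 : pt β n j < x) (h2 : x < pt β n (j+1)) : x ∉ Xn β n :=
  fun hx => pt_noBetween h x hx ⟨h1, h2⟩

lemma pt_succ_eq {j : ℕ} (h : j + 1 < (Xn β n).card) {b : ℝ} (hb : b ∈ Xn β n)
    (hab : pt β n j < b) (hnb : NoBetween (Xn β n) (pt β n j) b) :
    pt β n (j+1) = b := by
  have hbmem : b ∈ (Xn β n).sort (· ≤ ·) := (Finset.mem_sort _).2 hb
  obtain ⟨i, hi⟩ := List.mem_iff_get.1 hbmem
  have s := (Finset.sortedLT_sort (Xn β n)).strictMono_get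
  rw [pt_get (by omega), ← hi] at hab
  have hji : j < (i : ℕ) := s.lt_iff_lt.1 hab
  have hle : pt β n (j+1) ≤ b := by
    rw [pt_get h, ← hi]
    exact s.monotone (by exact Fin.mk_le_mk.2 hji)
  rcases eq_or_lt_of_le hle with heq | hlt
  · exact heq
  · exact absurd ⟨pt_lt_pt (Nat.lt_succ_self j) h, hlt⟩
      (hnb (pt β n (j+1)) (pt_mem h))

end Pt

end Stmt10Aux

/-- if the labels `w₁ = β^n(x₁-x₀)` and `w₂ = β^n(x₂-x₁)` of a triple
`(x₀,x₁,x₂)` in `X_n` both differ from `d_m`, and `(x₀,z₁,z₂,z₃)` are four consecutive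
points of `X_{n+1}`, then `W_{n+1}(z₁) = p₂W_n(x₀)`, `W_{n+1}(z₂) = p₁W_n(x₁)`,
`W_{n+1}(z₃) = p₂W_n(x₁)`. -/
theorem stmt_10 (m : ℕ) (hm : 2 ≤ m) (β : ℝ) (hβ1 : 1 < β) (hβ2 : β < 2)
    (hβ : β ^ m = ∑ j ∈ Finset.range m, β ^ j)
    (p1 p2 : ℝ) (hp1 : 0 < p1) (hp2 : 0 < p2) (hp : p1 + p2 = 1)
    (n j : ℕ) (hj : j + 2 < (Xn β n).card)
    (k : ℕ) (hk : k + 3 < (Xn β (n+1)).card)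
    (hx0 : pt β (n+1) k = pt β n j)
    (hw1 : β ^ n * (pt β n (j+1) - pt β n j) ≠ dd β m)
    (hw2 : β ^ n * (pt β n (j+2) - pt β n (j+1)) ≠ dd β m) :
    Wn β p1 p2 (n+1) (pt β (n+1) (k+1)) = p2 * Wn β p1 p2 n (pt β n j) ∧
    Wn β p1 p2 (n+1) (pt β (n+1) (k+2)) = p1 * Wn β p1 p2 n (pt β n (j+1)) ∧
    Wn β p1 p2 (n+1) (pt β (n+1) (k+3)) = p2 * Wn β p1 p2 n (pt β n (j+1)) := by
  classical
  have hβ0 : (0:ℝ) < β := lt_trans one_pos hβ1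
  have hm1 : 1 ≤ m := by omega
  have hpn : (0:ℝ) < β ^ n := pow_pos hβ0 n
  have hpnne : (β:ℝ) ^ n ≠ 0 := ne_of_gt hpn
  set δ : ℝ := (1 - 1/β) / β ^ n with hδ
  have hδ_eq : dd β m / β ^ n = δ := by rw [Stmt10Aux.dd_m_eq hm1 hβ1 hβ]
  have hδpos : 0 < δ := by
    rw [← hδ_eq]; exact div_pos (Stmt10Aux.dd_m_pos hm1 hβ1 hβ) hpn
  set x0 := pt β n j with hx0d
  set x1 := pt β n (j+1) with hx1d
  set x2 := pt β n (j+2) with hx2d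
  have h01 : x0 < x1 := Stmt10Aux.pt_lt_pt (by omega) (by omega)
  have h12 : x1 < x2 := Stmt10Aux.pt_lt_pt (by omega) hj
  have hx2X : x2 ∈ Xn β n := Stmt10Aux.pt_mem hj
  have hx1X : x1 ∈ Xn β n := Stmt10Aux.pt_mem (by omega)
  have hx0X : x0 ∈ Xn β n := Stmt10Aux.pt_mem (by omega)
  have hx2le : x2 ≤ 1 := Stmt10Aux.mem_Xn_le_one hβ1 hx2X
  have hx0Y : x0 ∈ Stmt10Aux.Yn β n := by
    rcases Stmt10Aux.mem_Xn_iff.1 hx0X with h | h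
    · exact h
    · exfalso; rw [h] at h01; linarith
  have hx1Y : x1 ∈ Stmt10Aux.Yn β n := by
    rcases Stmt10Aux.mem_Xn_iff.1 hx1X with h | h
    · exact h
    · exfalso; rw [h] at h12; linarith
  have hG := Stmt10Aux.gaps hm1 hβ1 hβ2 hβ n
  obtain ⟨i1, hi1, hg1⟩ := hG x0 x1 hx0X hx1X h01 (Stmt10Aux.pt_noBetween (by omega))
  obtain ⟨i2, hi2, hg2⟩ := hG x1 x2 hx1X hx2X h12 (Stmt10Aux.pt_noBetween hj)
  have hi1m : i1 < m := by
    rcases lt_or_eq_of_le hi1 with h | h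
    · exact h
    · exfalso; apply hw1; rw [hg1, h]; field_simp
  have hi2m : i2 < m := by
    rcases lt_or_eq_of_le hi2 with h | h
    · exact h
    · exfalso; apply hw2; rw [hg2, h]; field_simp
  have hgap1 : δ < x1 - x0 := by
    have hlt := Stmt10Aux.dd_m_lt hm1 hβ1 hβ2 hβ hi1m
    rw [hg1, ← hδ_eq]
    exact div_lt_div_of_pos_right hlt hpn
  have hgap2 : δ < x2 - x1 := by
    have hlt := Stmt10Aux.dd_m_lt hm1 hβ1 hβ2 hβ hi2m
    rw [hg2, ← hδ_eq]
    exact div_lt_div_of_pos_right hlt hpn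
  have hprev : ∀ c ∈ Xn β n, c < x0 → c ≤ x0 - δ := by
    intro c hc hlt
    have := Stmt10Aux.min_gap hm1 hβ1 hβ2 hβ hG hc hx0X hlt
    rw [hδ_eq] at this
    linarith
  -- identify the three points of X_{n+1} after x0
  have hz1 : pt β (n+1) (k+1) = x0 + δ := by
    apply Stmt10Aux.pt_succ_eq (by omega) (Stmt10Aux.add_mem_Xn_succ hx0Y)
    · rw [hx0]; linarith
    · rw [hx0]
      intro c hc hcc
      obtain ⟨hc1, hc2⟩ := hcc
      rcases Stmt10Aux.mem_Xn_succ_iff.1 hc with hcX | ⟨y, hyY, rfl⟩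
      · exact Stmt10Aux.pt_noBetween (n := n) (j := j) (by omega) c hcX
          ⟨by linarith, by linarith⟩
      · have hyX := Stmt10Aux.Yn_subset_Xn β n hyY
        have hy0 : y < x0 := by linarith
        have := hprev y hyX hy0
        linarith
  have hz2 : pt β (n+1) (k+2) = x1 := by
    apply Stmt10Aux.pt_succ_eq (j := k+1) (by omega)
      (Stmt10Aux.Xn_subset_Xn_succ n hx1X)
    · rw [hz1]; linarith
    · rw [hz1]
      intro c hc hcc
      obtain ⟨hc1, hc2⟩ := hcc
      rcases Stmt10Aux.mem_Xn_succ_iff.1 hc with hcX | ⟨y, hyY, rfl⟩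
      · exact Stmt10Aux.pt_noBetween (n := n) (j := j) (by omega) c hcX
          ⟨by linarith, by linarith⟩
      · exact Stmt10Aux.pt_noBetween (n := n) (j := j) (by omega) y
          (Stmt10Aux.Yn_subset_Xn β n hyY) ⟨by linarith, by linarith⟩
  have hz3 : pt β (n+1) (k+3) = x1 + δ := by
    apply Stmt10Aux.pt_succ_eq (j := k+2) (by omega)
      (Stmt10Aux.add_mem_Xn_succ hx1Y)
    · rw [hz2]; linarith
    · rw [hz2]
      intro c hc hcc
      obtain ⟨hc1, hc2⟩ := hcc
      rcases Stmt10Aux.mem_Xn_succ_iff.1 hc with hcX | ⟨y, hyY, rfl⟩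
      · exact Stmt10Aux.pt_noBetween (n := n) (j := j+1) hj c hcX
          ⟨by linarith, by linarith⟩
      · exact Stmt10Aux.pt_noBetween (n := n) (j := j) (by omega) y
          (Stmt10Aux.Yn_subset_Xn β n hyY) ⟨by linarith, by linarith⟩
  -- the three vanishing weights
  have hv1 : Wn β p1 p2 n (x0 + δ) = 0 :=
    Stmt10Aux.Wn_eq_zero p1 p2
      (Stmt10Aux.pt_not_mem_between (n := n) (j := j) (by omega)
        (by rw [← hx0d]; linarith) (by rw [← hx1d]; linarith))
  have hv2 : Wn β p1 p2 n (x1 - δ) = 0 :=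
    Stmt10Aux.Wn_eq_zero p1 p2
      (Stmt10Aux.pt_not_mem_between (n := n) (j := j) (by omega)
        (by rw [← hx0d]; linarith) (by rw [← hx1d]; linarith))
  have hv3 : Wn β p1 p2 n (x1 + δ) = 0 :=
    Stmt10Aux.Wn_eq_zero p1 p2
      (Stmt10Aux.pt_not_mem_between (n := n) (j := j+1) hj
        (by rw [← hx1d]; linarith) (by rw [← hx2d]; linarith))
  refine ⟨?_, ?_, ?_⟩
  · rw [hz1, Stmt10Aux.Wn_succ β p1 p2 n (x0 + δ), ← hδ, add_sub_cancel_right, hv1]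
    ring
  · rw [hz2, Stmt10Aux.Wn_succ β p1 p2 n x1, ← hδ, hv2]
    ring
  · rw [hz3, Stmt10Aux.Wn_succ β p1 p2 n (x1 + δ), ← hδ, add_sub_cancel_right, hv3]
    ring
end
end

section
/- Let (x₀, x₁, x₂) = (a_{n,j}, a_{n,j+1}, a_{n,j+2}) be a triple in X_n, with labels w₁ = β^n(x₁ − x₀) and w₂ = β^n(x₂ − x₁), and let (x₀, z₁, z₂, z₃) be four consecutive points of X_{n+1}. If w₁ = d_m and w₂ = d₁, then W_{n+1}(z₁) = p₂·W_n(x₀) + p₁·W_n(x₁), W_{n+1}(z₂) = p₂·W_n(x₁), and W_{n+1}(z₃) = p₁·W_n(x₂). -/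
open MeasureTheory

noncomputable section

namespace Stmt11Aux

variable {β : ℝ}

def eps (β : ℝ) (n : ℕ) : ℝ := (β - 1) / β ^ (n + 1)

lemma Sapply_zero (β : ℝ) (I : Fin 0 → Fin 2) (x : ℝ) : Sapply β I x = x := rfl

lemma Sapply_succ (β : ℝ) {n : ℕ} (I : Fin (n+1) → Fin 2) (x : ℝ) :
    Sapply β I x = Smap β (I 0) (Sapply β (fun k => I k.succ) x) := rfl

lemma Smap_zero_apply (β x : ℝ) : Smap β 0 x = x / β := if_pos rfl

lemma Smap_one_apply (β x : ℝ) : Smap β 1 x = x / β + (1 - 1 / β) := if_neg (by decide)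

lemma Smap_add (i : Fin 2) (x y : ℝ) :
    Smap β i (x + y) = Smap β i x + y / β := by
  unfold Smap; split_ifs <;> rw [add_div] <;> ring

lemma Sapply_affine : ∀ {n : ℕ} (I : Fin n → Fin 2) (x : ℝ),
    Sapply β I x = Sapply β I 0 + x / β ^ n := by
  intro n
  induction n with
  | zero => intro I x; simp [Sapply_zero]
  | succ n ih =>
    intro I x
    rw [Sapply_succ, ih _ x, Smap_add, ← Sapply_succ, div_div, ← pow_succ]

lemma Sapply_snoc (β : ℝ) : ∀ {n : ℕ} (J : Fin n → Fin 2) (i : Fin 2) (x : ℝ),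
    Sapply β (Fin.snoc J i) x = Sapply β J (Smap β i x) := by
  intro n
  induction n with
  | zero =>
    intro J i x
    rw [Sapply_succ]
    have h0 : (Fin.snoc J i : Fin 1 → Fin 2) 0 = i := by
      have h : (0 : Fin 1) = Fin.last 0 := rfl
      rw [h, Fin.snoc_last]
    rw [h0]; rfl
  | succ n ih =>
    intro J i x
    rw [Sapply_succ]
    have h0 : (Fin.snoc J i : Fin (n+2) → Fin 2) 0 = J 0 := by
      have h : (0 : Fin (n+2)) = Fin.castSucc 0 := rfl
      rw [h, Fin.snoc_castSucc]
    have htail : (fun k : Fin (n+1) => (Fin.snoc J i : Fin (n+2) → Fin 2) k.succ)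
        = Fin.snoc (fun k : Fin n => J k.succ) i := by
      funext k
      refine Fin.lastCases ?_ ?_ k
      · have h1 : (Fin.last n).succ = Fin.last (n+1) := rfl
        rw [h1, Fin.snoc_last, Fin.snoc_last]
      · intro k'
        have h1 : (Fin.castSucc k').succ = Fin.castSucc k'.succ := rfl
        rw [h1, Fin.snoc_castSucc, Fin.snoc_castSucc]
    rw [h0, htail, ih]
    rfl

lemma Sapply_bounds (hβ : 1 < β) : ∀ {n : ℕ} (I : Fin n → Fin 2),
    0 ≤ Sapply β I 0 ∧ Sapply β I 0 ≤ 1 - 1 / β ^ n := by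
  intro n
  induction n with
  | zero => intro I; norm_num [Sapply_zero]
  | succ n ih =>
    intro I
    obtain ⟨h1, h2⟩ := ih (fun k => I k.succ)
    rw [Sapply_succ]
    have hb : (0:ℝ) < β := by linarith
    have hbn : (0:ℝ) < β ^ n := by positivity
    have hbn1 : (0:ℝ) < β ^ (n+1) := by positivity
    set y := Sapply β (fun k => I k.succ) 0 with hy
    have h3 : y / β ≤ (1 - 1/β^n)/β := div_le_div_of_nonneg_right h2 hb.le
    have h4 : (1 - 1/β^n)/β = 1/β - 1/β^(n+1) := by
      rw [pow_succ]; field_simp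
    have h5 : 1/β ≤ 1 := by rw [div_le_one hb]; linarith
    have h6 : 0 ≤ y / β := by positivity
    unfold Smap
    split_ifs
    · constructor
      · exact h6
      · linarith
    · constructor
      · linarith
      · linarith

lemma Sapply_const_zero : ∀ (n : ℕ), Sapply β (fun _ : Fin n => (0:Fin 2)) 0 = 0 := by
  intro n
  induction n with
  | zero => rfl
  | succ n ih => rw [Sapply_succ]; simp only [ih, Smap_zero_apply, zero_div]

def Yn (β : ℝ) (n : ℕ) : Finset ℝ :=
  Finset.univ.image fun I : Fin n → Fin 2 => Sapply β I 0

lemma Xn_eq (β : ℝ) (n : ℕ) : Xn β n = Yn β n ∪ {1} := rfl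

lemma mem_Yn {n : ℕ} {x : ℝ} : x ∈ Yn β n ↔ ∃ I : Fin n → Fin 2, Sapply β I 0 = x := by
  simp [Yn]

lemma Yn_subset_Xn (β : ℝ) (n : ℕ) : Yn β n ⊆ Xn β n := by
  rw [Xn_eq]; exact Finset.subset_union_left

lemma one_mem_Xn (β : ℝ) (n : ℕ) : (1:ℝ) ∈ Xn β n := by
  rw [Xn_eq]; exact Finset.mem_union_right _ (by simp)

lemma zero_mem_Yn (β : ℝ) (n : ℕ) : (0:ℝ) ∈ Yn β n :=
  mem_Yn.mpr ⟨fun _ => 0, Sapply_const_zero n⟩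

lemma zero_mem_Xn (β : ℝ) (n : ℕ) : (0:ℝ) ∈ Xn β n := Yn_subset_Xn β n (zero_mem_Yn β n)

lemma Yn_lt_one (hβ : 1 < β) {n : ℕ} {x : ℝ} (hx : x ∈ Yn β n) : x < 1 := by
  obtain ⟨I, rfl⟩ := mem_Yn.mp hx
  have h := (Sapply_bounds hβ I).2
  have hbn : (0:ℝ) < β ^ n := by positivity
  have : 0 < 1 / β ^ n := by positivity
  linarith

lemma Xn_nonneg (hβ : 1 < β) {n : ℕ} {x : ℝ} (hx : x ∈ Xn β n) : 0 ≤ x := by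
  rw [Xn_eq] at hx
  rcases Finset.mem_union.mp hx with h | h
  · obtain ⟨I, rfl⟩ := mem_Yn.mp h
    exact (Sapply_bounds hβ I).1
  · simp at h; rw [h]; norm_num

lemma Xn_le_one (hβ : 1 < β) {n : ℕ} {x : ℝ} (hx : x ∈ Xn β n) : x ≤ 1 := by
  rw [Xn_eq] at hx
  rcases Finset.mem_union.mp hx with h | h
  · exact (Yn_lt_one hβ h).le
  · simp at h; rw [h]

lemma mem_Yn_of_ne_one {n : ℕ} {x : ℝ} (hx : x ∈ Xn β n) (hx1 : x ≠ 1) : x ∈ Yn β n := by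
  rw [Xn_eq] at hx
  rcases Finset.mem_union.mp hx with h | h
  · exact h
  · simp at h; exact absurd h hx1

lemma eps_eq (hβ : 1 < β) (n : ℕ) : (1 - 1/β)/β^n = eps β n := by
  have hb : (0:ℝ) < β := by linarith
  have hbn : (0:ℝ) < β ^ n := by positivity
  have h1 : 1 - 1/β = (β-1)/β := by field_simp
  unfold eps
  rw [h1, div_div, ← pow_succ']

lemma Yn_succ (hβ : 1 < β) (n : ℕ) :
    Yn β (n+1) = Yn β n ∪ (Yn β n).image (· + eps β n) := by
  ext x
  simp only [mem_Yn, Finset.mem_union, Finset.mem_image]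
  constructor
  · rintro ⟨I, rfl⟩
    have hI : Sapply β I 0 = Sapply β (Fin.init I) (Smap β (I (Fin.last n)) 0) := by
      rw [← Sapply_snoc, Fin.snoc_init_self]
    by_cases hi : I (Fin.last n) = 0
    · left
      refine ⟨Fin.init I, ?_⟩
      rw [hI, hi, Smap_zero_apply, zero_div]
    · right
      have hi1 : I (Fin.last n) = 1 := by omega
      refine ⟨Sapply β (Fin.init I) 0, ⟨Fin.init I, rfl⟩, ?_⟩
      rw [hI, hi1, Smap_one_apply, zero_div, zero_add,
        Sapply_affine (Fin.init I) (1 - 1/β), eps_eq hβ]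
  · rintro (⟨J, rfl⟩ | ⟨y, ⟨J, rfl⟩, rfl⟩)
    · exact ⟨Fin.snoc J 0, by rw [Sapply_snoc, Smap_zero_apply, zero_div]⟩
    · refine ⟨Fin.snoc J 1, ?_⟩
      rw [Sapply_snoc, Smap_one_apply, zero_div, zero_add,
        Sapply_affine J (1 - 1/β), eps_eq hβ]


lemma Xn_succ (hβ : 1 < β) (n : ℕ) :
    Xn β (n+1) = Xn β n ∪ (Yn β n).image (· + eps β n) := by
  rw [Xn_eq, Xn_eq, Yn_succ hβ]
  ext x
  simp only [Finset.mem_union, Finset.mem_singleton]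
  tauto

lemma Xn_mono (hβ : 1 < β) (n : ℕ) : Xn β n ⊆ Xn β (n+1) := by
  rw [Xn_succ hβ]; exact Finset.subset_union_left

lemma Xn_zero (β : ℝ) : Xn β 0 = {0, 1} := by
  ext x
  rw [Xn_eq]
  simp only [Finset.mem_union, Finset.mem_singleton, Finset.mem_insert, mem_Yn]
  constructor
  · rintro (⟨I, rfl⟩ | h)
    · exact Or.inl rfl
    · exact Or.inr h
  · rintro (rfl | rfl)
    · exact Or.inl ⟨fun i => i.elim0, rfl⟩
    · exact Or.inr rfl

lemma pw_zero (p1 p2 : ℝ) : pw p1 p2 0 = p1 := if_pos rfl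
lemma pw_one (p1 p2 : ℝ) : pw p1 p2 1 = p2 := if_neg (by decide)

lemma Wn_eq_zero {p1 p2 : ℝ} {n : ℕ} {x : ℝ} (hx : x ∉ Yn β n) :
    Wn β p1 p2 n x = 0 := by
  apply Finset.sum_eq_zero
  intro I _
  rw [if_neg]
  intro h
  exact hx (mem_Yn.mpr ⟨I, h⟩)

def snocEquiv (n : ℕ) : ((Fin n → Fin 2) × Fin 2) ≃ (Fin (n+1) → Fin 2) :=
    ⟨fun Ji => Fin.snoc Ji.1 Ji.2, fun I => (Fin.init I, I (Fin.last n)),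
     fun ⟨J, i⟩ => by simp, fun I => by simp⟩

lemma Wn_succ (hβ : 1 < β) (p1 p2 : ℝ) (n : ℕ) (x : ℝ) :
    Wn β p1 p2 (n+1) x
      = p1 * Wn β p1 p2 n x + p2 * Wn β p1 p2 n (x - eps β n) := by
  have hprod : ∀ (J : Fin n → Fin 2) (i : Fin 2),
      (∏ k : Fin (n+1), pw p1 p2 ((Fin.snoc J i : Fin (n+1) → Fin 2) k)) = (∏ k, pw p1 p2 (J k)) * pw p1 p2 i := by
    intro J i
    rw [Fin.prod_univ_castSucc]
    simp only [Fin.snoc_castSucc, Fin.snoc_last]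
  have hcond0 : ∀ J : Fin n → Fin 2,
      Sapply β (Fin.snoc J (0:Fin 2)) 0 = Sapply β J 0 := by
    intro J; rw [Sapply_snoc, Smap_zero_apply, zero_div]
  have hcond1 : ∀ J : Fin n → Fin 2,
      Sapply β (Fin.snoc J (1:Fin 2)) 0 = Sapply β J 0 + eps β n := by
    intro J
    rw [Sapply_snoc, Smap_one_apply, zero_div, zero_add,
      Sapply_affine J (1 - 1/β), eps_eq hβ]
  have key : ∀ c : ℝ,
      (∑ J : Fin n → Fin 2, if Sapply β J 0 + c = x then (∏ k, pw p1 p2 (J k)) else 0)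
        = Wn β p1 p2 n (x - c) := by
    intro c
    rw [Wn]
    apply Finset.sum_congr rfl
    intro J _
    have h : (Sapply β J 0 + c = x) ↔ (Sapply β J 0 = x - c) := by
      constructor <;> intro h <;> linarith
    rw [if_congr h rfl rfl]
  rw [Wn, ← Equiv.sum_comp (snocEquiv n)
    (fun I => if Sapply β I 0 = x then ∏ k, pw p1 p2 (I k) else 0),
    Fintype.sum_prod_type]
  have hswap : ∀ J : Fin n → Fin 2,
      (∑ i : Fin 2, if Sapply β (Fin.snoc J i) 0 = x then ∏ k, pw p1 p2 ((Fin.snoc J i : Fin (n+1) → Fin 2) k) else 0)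
      = (if Sapply β J 0 + 0 = x then (∏ k, pw p1 p2 (J k)) else 0) * p1
        + (if Sapply β J 0 + eps β n = x then (∏ k, pw p1 p2 (J k)) else 0) * p2 := by
    intro J
    rw [Fin.sum_univ_two]
    simp only [hprod, hcond0, hcond1, pw_zero, pw_one]
    rw [add_zero]
    split_ifs <;> ring
  calc (∑ J : Fin n → Fin 2, ∑ i : Fin 2,
          if Sapply β (snocEquiv n (J, i)) 0 = x then ∏ k, pw p1 p2 ((snocEquiv n (J, i)) k) else 0)
      = ∑ J : Fin n → Fin 2,
          ((if Sapply β J 0 + 0 = x then (∏ k, pw p1 p2 (J k)) else 0) * p1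
          + (if Sapply β J 0 + eps β n = x then (∏ k, pw p1 p2 (J k)) else 0) * p2) := by
        apply Finset.sum_congr rfl
        intro J _
        exact hswap J
    _ = (∑ J : Fin n → Fin 2, if Sapply β J 0 + 0 = x then (∏ k, pw p1 p2 (J k)) else 0) * p1
        + (∑ J : Fin n → Fin 2, if Sapply β J 0 + eps β n = x then (∏ k, pw p1 p2 (J k)) else 0) * p2 := by
        rw [Finset.sum_add_distrib, Finset.sum_mul, Finset.sum_mul]
    _ = p1 * Wn β p1 p2 n x + p2 * Wn β p1 p2 n (x - eps β n) := by
        rw [key 0, key (eps β n), sub_zero]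
        ring

-- dd lemmas
lemma dd_zero (β : ℝ) : dd β 0 = 1 := rfl
lemma dd_one (β : ℝ) : dd β 1 = β - 1 := rfl
lemma dd_add_two (β : ℝ) (j : ℕ) : dd β (j+2) = β * dd β (j+1) - (β-1) := rfl

lemma dd_closed (β : ℝ) : ∀ j : ℕ, dd β (j+1) = 1 + (β-2) * β^j := by
  intro j
  induction j with
  | zero => rw [dd_one]; ring
  | succ j ih => rw [dd_add_two, ih]; ring

lemma beta_key {m : ℕ} (hβ1 : 1 < β) (hβ : β^m = ∑ j ∈ Finset.range m, β^j) :
    (β-2) * β^m = -1 := by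
  rw [geom_sum_eq (by intro h; rw [h] at hβ1; exact lt_irrefl 1 hβ1)] at hβ
  have h1 : β - 1 ≠ 0 := sub_ne_zero.mpr (ne_of_gt hβ1)
  field_simp at hβ
  linear_combination hβ

lemma dd_m {m : ℕ} (hm : 2 ≤ m) (hβ1 : 1 < β) (hkey : (β-2) * β^m = -1) :
    dd β m = (β-1)/β := by
  obtain ⟨r, rfl⟩ : ∃ r, m = r + 1 := ⟨m-1, by omega⟩
  rw [dd_closed]
  have hb0 : β ≠ 0 := by intro h; rw [h] at hβ1; linarith
  rw [eq_div_iff hb0]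
  linear_combination hkey

lemma dd_ge {m : ℕ} (hβ1 : 1 < β) (hβ2 : β < 2) (hkey : (β-2) * β^m = -1) :
    ∀ i ≤ m, (β-1)/β ≤ dd β i := by
  have hb : (0:ℝ) < β := by linarith
  intro i hi
  match i with
  | 0 =>
    rw [dd_zero, div_le_one hb]; linarith
  | (r+1) =>
    rw [dd_closed]
    have h1 : β^(r+1) ≤ β^m := pow_le_pow_right₀ hβ1.le hi
    have h2 : (2-β) * β^(r+1) ≤ 1 := by
      nlinarith [mul_nonneg (show (0:ℝ) ≤ 2 - β by linarith) (sub_nonneg.mpr h1)]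
    rw [div_le_iff₀ hb]
    have h3 : (1 + (β-2)*β^r)*β = β + (β-2)*β^(r+1) := by rw [pow_succ]; ring
    rw [h3]
    linarith

lemma dd_gt {m : ℕ} (hβ1 : 1 < β) (hβ2 : β < 2) (hkey : (β-2) * β^m = -1) :
    ∀ i < m, (β-1)/β < dd β i := by
  have hb : (0:ℝ) < β := by linarith
  intro i hi
  match i with
  | 0 =>
    rw [dd_zero, div_lt_one hb]; linarith
  | (r+1) =>
    rw [dd_closed]
    have h1 : β^(r+1) < β^m := pow_lt_pow_right₀ hβ1 hi
    have h2 : (2-β) * β^(r+1) < 1 := by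
      nlinarith [mul_pos (show (0:ℝ) < 2 - β by linarith) (sub_pos.mpr h1)]
    rw [div_lt_iff₀ hb]
    have h3 : (1 + (β-2)*β^r)*β = β + (β-2)*β^(r+1) := by rw [pow_succ]; ring
    rw [h3]
    linarith

lemma eps_pos (hβ : 1 < β) (n : ℕ) : 0 < eps β n := by
  unfold eps
  have : (0:ℝ) < β := by linarith
  apply div_pos (by linarith) (by positivity)


def Adj (s : Finset ℝ) (a b : ℝ) : Prop :=
  a ∈ s ∧ b ∈ s ∧ a < b ∧ ∀ c ∈ s, ¬(a < c ∧ c < b)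

lemma minGap {m n : ℕ} (hβ1 : 1 < β) (hβ2 : β < 2) (hkey : (β-2) * β^m = -1)
    (hgap : ∀ a b : ℝ, Adj (Xn β n) a b → ∃ i, i ≤ m ∧ b - a = dd β i / β^n) :
    ∀ a ∈ Xn β n, ∀ b ∈ Xn β n, a < b → eps β n ≤ b - a := by
  intro a ha b hb hab
  have hb0 : (0:ℝ) < β := by linarith
  have hbn : (0:ℝ) < β^n := by positivity
  have htne : ((Xn β n).filter (a < ·)).Nonempty :=
    ⟨b, Finset.mem_filter.mpr ⟨hb, hab⟩⟩
  set v := ((Xn β n).filter (a < ·)).min' htne with hv_def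
  have hv := Finset.mem_filter.mp (Finset.min'_mem _ htne)
  have hvb : v ≤ b := Finset.min'_le _ b (Finset.mem_filter.mpr ⟨hb, hab⟩)
  have hadj : Adj (Xn β n) a v := by
    refine ⟨ha, hv.1, hv.2, ?_⟩
    rintro c hc ⟨h1, h2⟩
    exact absurd (Finset.min'_le _ c (Finset.mem_filter.mpr ⟨hc, h1⟩)) (not_le.mpr h2)
  obtain ⟨i, him, hi⟩ := hgap a v hadj
  have hdi := dd_ge hβ1 hβ2 hkey i him
  have h2 : eps β n ≤ v - a := by
    rw [hi, show eps β n = ((β-1)/β)/β^n from by unfold eps; rw [div_div, ← pow_succ']]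
    exact div_le_div_of_nonneg_right hdi hbn.le
  linarith

theorem gap_theorem {m : ℕ} (hm : 2 ≤ m) (hβ1 : 1 < β) (hβ2 : β < 2)
    (hkey : (β-2) * β^m = -1) :
    ∀ (n : ℕ) (a b : ℝ), Adj (Xn β n) a b → ∃ i, i ≤ m ∧ b - a = dd β i / β^n := by
  have hb0 : (0:ℝ) < β := by linarith
  intro n
  induction n with
  | zero =>
    rintro a b ⟨ha, hb, hab, -⟩
    rw [Xn_zero] at ha hb
    simp only [Finset.mem_insert, Finset.mem_singleton] at ha hb
    refine ⟨0, Nat.zero_le m, ?_⟩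
    rw [dd_zero, pow_zero]
    rcases ha with rfl | rfl <;> rcases hb with rfl | rfl <;> norm_num at hab <;> norm_num
  | succ n ih =>
    rintro a b ⟨ha, hb, hab, hbtw⟩
    have hbn : (0:ℝ) < β^n := by positivity
    have hmg : ∀ x ∈ Xn β n, ∀ y ∈ Xn β n, x < y → eps β n ≤ y - x :=
      minGap hβ1 hβ2 hkey ih
    have heps_pos : 0 < eps β n := eps_pos hβ1 n
    have ha0 : (0:ℝ) ≤ a := Xn_nonneg hβ1 ha
    have hb1 : b ≤ 1 := Xn_le_one hβ1 hb
    have ha1 : a < 1 := lt_of_lt_of_le hab hb1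
    -- u : last point of Xn n that is ≤ a
    have hsne : ((Xn β n).filter (· ≤ a)).Nonempty :=
      ⟨0, Finset.mem_filter.mpr ⟨zero_mem_Xn β n, ha0⟩⟩
    set u := ((Xn β n).filter (· ≤ a)).max' hsne with hu_def
    have hu := Finset.mem_filter.mp (Finset.max'_mem _ hsne)
    -- v : first point of Xn n that is > a
    have htne : ((Xn β n).filter (a < ·)).Nonempty :=
      ⟨1, Finset.mem_filter.mpr ⟨one_mem_Xn β n, ha1⟩⟩
    set v := ((Xn β n).filter (a < ·)).min' htne with hv_def
    have hv := Finset.mem_filter.mp (Finset.min'_mem _ htne)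
    have huv : u < v := lt_of_le_of_lt hu.2 hv.2
    have hadj_uv : Adj (Xn β n) u v := by
      refine ⟨hu.1, hv.1, huv, ?_⟩
      rintro c hc ⟨h1, h2⟩
      rcases le_or_gt c a with h | h
      · exact absurd (Finset.le_max' ((Xn β n).filter (· ≤ a)) c
          (Finset.mem_filter.mpr ⟨hc, h⟩)) (not_le.mpr h1)
      · exact absurd (Finset.min'_le _ c (Finset.mem_filter.mpr ⟨hc, h⟩)) (not_le.mpr h2)
    obtain ⟨i, him, hgap⟩ := ih u v hadj_uv
    have hu_Yn : u ∈ Yn β n :=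
      mem_Yn_of_ne_one hu.1 (ne_of_lt (lt_of_le_of_lt hu.2 ha1))
    have hue_mem : u + eps β n ∈ Xn β (n+1) := by
      rw [Xn_succ hβ1]
      exact Finset.mem_union_right _ (Finset.mem_image.mpr ⟨u, hu_Yn, rfl⟩)
    have hepsd : eps β n = ((β-1)/β) / β^n := by
      unfold eps; rw [div_div, ← pow_succ']
    have huev : u + eps β n ≤ v := by
      have hdi := dd_ge hβ1 hβ2 hkey i him
      have h2 : eps β n ≤ v - u := by
        rw [hgap, hepsd]
        exact div_le_div_of_nonneg_right hdi hbn.le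
      linarith
    have hbetw' : ∀ x ∈ Xn β (n+1), u ≤ x → x ≤ v →
        x = u ∨ x = u + eps β n ∨ x = v := by
      intro x hx hux hxv
      rw [Xn_succ hβ1] at hx
      rcases Finset.mem_union.mp hx with hx | hx
      · rcases eq_or_lt_of_le hux with h | h
        · exact Or.inl h.symm
        rcases eq_or_lt_of_le hxv with h' | h'
        · exact Or.inr (Or.inr h')
        exact absurd ⟨h, h'⟩ (hadj_uv.2.2.2 x hx)
      · obtain ⟨y, hy, rfl⟩ := Finset.mem_image.mp hx
        have hyX : y ∈ Xn β n := Yn_subset_Xn β n hy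
        rcases lt_trichotomy y u with h | h | h
        · have h1 := hmg y hyX u hu.1 h
          exact Or.inl (by linarith)
        · exact Or.inr (Or.inl (by rw [h]))
        · have hyv : y < v := by linarith
          exact absurd ⟨h, hyv⟩ (hadj_uv.2.2.2 y hyX)
    have hbv : b ≤ v := by
      by_contra hc
      push_neg at hc
      exact hbtw v (Xn_mono hβ1 n hv.1) ⟨hv.2, hc⟩
    have haclass := hbetw' a ha hu.2 hv.2.le
    have hbclass := hbetw' b hb (le_trans hu.2 hab.le) hbv
    rcases haclass with haa | haa | haa
    · -- a = u
      have hbue : b = u + eps β n := by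
        rcases hbclass with h | h | h
        · exfalso; rw [haa, h] at hab; exact lt_irrefl _ hab
        · exact h
        · rcases eq_or_lt_of_le huev with he | he
          · rw [h, ← he]
          · exact absurd ⟨by rw [haa]; linarith, by rw [h]; exact he⟩
              (hbtw (u + eps β n) hue_mem)
      refine ⟨1, by omega, ?_⟩
      rw [hbue, haa, dd_one]
      unfold eps
      ring
    · -- a = u + eps
      have hbv' : b = v := by
        rcases hbclass with h | h | h
        · exfalso; rw [haa, h] at hab; linarith
        · exfalso; rw [haa, h] at hab; exact lt_irrefl _ hab
        · exact h
      have him' : i < m := by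
        rcases eq_or_lt_of_le him with he | he
        · exfalso
          rw [he, dd_m hm hβ1 hkey, ← hepsd] at hgap
          have hav : a < v := hv.2
          have : a = v := by rw [haa]; linarith
          exact absurd this (ne_of_lt hav)
        · exact he
      rcases Nat.eq_zero_or_pos i with hi0 | hip
      · refine ⟨0, Nat.zero_le m, ?_⟩
        rw [hi0, dd_zero] at hgap
        rw [hbv', haa, dd_zero]
        have harith : (1:ℝ)/β^n - (β-1)/β^(n+1) = 1/β^(n+1) := by
          rw [pow_succ]
          field_simp
          ring
        unfold eps
        linarith
      · obtain ⟨r, rfl⟩ : ∃ r, i = r + 1 := ⟨i-1, by omega⟩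
        refine ⟨r + 2, by omega, ?_⟩
        rw [hbv', haa, dd_add_two]
        have harith : (β * dd β (r+1) - (β-1))/β^(n+1)
            = dd β (r+1)/β^n - (β-1)/β^(n+1) := by
          rw [pow_succ]
          field_simp
        rw [harith]
        unfold eps
        linarith
    · exact absurd haa (ne_of_lt hv.2)


lemma pt_eq_get {N j : ℕ} (h : j < (Xn β N).card) :
    pt β N j = ((Xn β N).sort (· ≤ ·)).get
      ⟨j, by rw [Finset.length_sort]; exact h⟩ := by
  unfold pt
  exact List.getD_eq_get _ _ ⟨j, by rw [Finset.length_sort]; exact h⟩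

lemma pt_mem {N j : ℕ} (h : j < (Xn β N).card) : pt β N j ∈ Xn β N := by
  rw [pt_eq_get h]
  exact (Finset.mem_sort (· ≤ · : ℝ → ℝ → Prop)).mp (List.get_mem _ _)

lemma pt_lt_pt {N j : ℕ} (h : j + 1 < (Xn β N).card) : pt β N j < pt β N (j+1) := by
  rw [pt_eq_get (by omega), pt_eq_get h]
  exact (Finset.sortedLT_sort _).strictMono_get (by simp [Fin.lt_def])

lemma pt_between {N j : ℕ} (h : j + 1 < (Xn β N).card) :
    ∀ c ∈ Xn β N, ¬(pt β N j < c ∧ c < pt β N (j+1)) := by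
  rintro c hc ⟨h1, h2⟩
  obtain ⟨ic, hic⟩ := List.mem_iff_get.mp ((Finset.mem_sort (· ≤ · : ℝ → ℝ → Prop)).mpr hc)
  have hmono := (Finset.sortedLT_sort (Xn β N)).strictMono_get
  rw [pt_eq_get (show j < (Xn β N).card by omega), ← hic] at h1
  rw [pt_eq_get h, ← hic] at h2
  have ha := Fin.lt_def.mp (hmono.lt_iff_lt.mp h1)
  have hb := Fin.lt_def.mp (hmono.lt_iff_lt.mp h2)
  simp only at ha hb
  omega

lemma pt_succ_eq {N k : ℕ} (h : k + 1 < (Xn β N).card) {b : ℝ} (hb : b ∈ Xn β N)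
    (h1 : pt β N k < b) (h2 : ∀ c ∈ Xn β N, ¬(pt β N k < c ∧ c < b)) :
    pt β N (k+1) = b := by
  obtain ⟨ib, hib⟩ := List.mem_iff_get.mp ((Finset.mem_sort (· ≤ · : ℝ → ℝ → Prop)).mpr hb)
  have hmono := (Finset.sortedLT_sort (Xn β N)).strictMono_get
  have hlt : (⟨k, by rw [Finset.length_sort]; omega⟩ :
      Fin ((Xn β N).sort (· ≤ ·)).length) < ib := by
    rw [pt_eq_get (show k < (Xn β N).card by omega), ← hib] at h1
    exact hmono.lt_iff_lt.mp h1
  have h3 : pt β N (k+1) ≤ b := by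
    rw [pt_eq_get h, ← hib]
    apply hmono.monotone
    rw [Fin.le_def]
    have := Fin.lt_def.mp hlt
    simp only at this ⊢
    omega
  rcases eq_or_lt_of_le h3 with he | hlt2
  · exact he
  · exact absurd ⟨pt_lt_pt h, hlt2⟩ (h2 _ (pt_mem h))

theorem main (m : ℕ) (hm : 2 ≤ m) (hβ1 : 1 < β) (hβ2 : β < 2)
    (hβ : β ^ m = ∑ j ∈ Finset.range m, β ^ j)
    (p1 p2 : ℝ) (hp1 : 0 < p1) (hp2 : 0 < p2) (hp : p1 + p2 = 1)
    (n j : ℕ) (hj : j + 2 < (Xn β n).card)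
    (k : ℕ) (hk : k + 3 < (Xn β (n+1)).card)
    (hx0 : pt β (n+1) k = pt β n j)
    (hw1 : β ^ n * (pt β n (j+1) - pt β n j) = dd β m)
    (hw2 : β ^ n * (pt β n (j+2) - pt β n (j+1)) = dd β 1) :
    Wn β p1 p2 (n+1) (pt β (n+1) (k+1)) =
      p2 * Wn β p1 p2 n (pt β n j) + p1 * Wn β p1 p2 n (pt β n (j+1)) ∧
    Wn β p1 p2 (n+1) (pt β (n+1) (k+2)) = p2 * Wn β p1 p2 n (pt β n (j+1)) ∧
    Wn β p1 p2 (n+1) (pt β (n+1) (k+3)) = p1 * Wn β p1 p2 n (pt β n (j+2)) := by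
  have hb0 : (0:ℝ) < β := by linarith
  have hbn : (β:ℝ)^n ≠ 0 := by positivity
  have hkey := beta_key hβ1 hβ
  have hddm := dd_m hm hβ1 hkey
  have hgapn := gap_theorem hm hβ1 hβ2 hkey n
  have hmg := minGap hβ1 hβ2 hkey hgapn
  set x0 := pt β n j with hx0d
  set x1 := pt β n (j+1) with hx1d
  set x2 := pt β n (j+2) with hx2d
  have hx0m : x0 ∈ Xn β n := pt_mem (by omega)
  have hx1m : x1 ∈ Xn β n := pt_mem (by omega)
  have hx2m : x2 ∈ Xn β n := pt_mem (by omega)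
  have hx01 : x0 < x1 := pt_lt_pt (by omega)
  have hx12 : x1 < x2 := pt_lt_pt hj
  have hbtw01 : ∀ c ∈ Xn β n, ¬(x0 < c ∧ c < x1) := pt_between (by omega)
  have hbtw12 : ∀ c ∈ Xn β n, ¬(x1 < c ∧ c < x2) := pt_between hj
  have heps_pos : 0 < eps β n := eps_pos hβ1 n
  have hepsd : eps β n = ((β-1)/β)/β^n := by unfold eps; rw [div_div, ← pow_succ']
  have hgap1 : x1 - x0 = eps β n := by
    rw [hepsd, eq_div_iff hbn]
    rw [hddm] at hw1
    linear_combination hw1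
  have hgap2 : x2 - x1 = (β-1)/β^n := by
    rw [eq_div_iff hbn, dd_one] at *
    linear_combination hw2
  have heps_lt : eps β n < x2 - x1 := by
    rw [hgap2]
    unfold eps
    exact div_lt_div_of_pos_left (by linarith) (by positivity)
      (pow_lt_pow_right₀ hβ1 (by omega))
  have hx1Y : x1 ∈ Yn β n :=
    mem_Yn_of_ne_one hx1m (ne_of_lt (lt_of_lt_of_le hx12 (Xn_le_one hβ1 hx2m)))
  have hx1mem1 : x1 ∈ Xn β (n+1) := Xn_mono hβ1 n hx1m
  have hz2mem : x1 + eps β n ∈ Xn β (n+1) := by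
    rw [Xn_succ hβ1]
    exact Finset.mem_union_right _ (Finset.mem_image.mpr ⟨x1, hx1Y, rfl⟩)
  have hx2mem1 : x2 ∈ Xn β (n+1) := Xn_mono hβ1 n hx2m
  -- identify the three successive points of X_{n+1} after x0
  have hk1 : pt β (n+1) (k+1) = x1 := by
    apply pt_succ_eq (by omega) hx1mem1 (by rw [hx0]; exact hx01)
    rw [hx0]
    rintro c hc ⟨hc1, hc2⟩
    rw [Xn_succ hβ1] at hc
    rcases Finset.mem_union.mp hc with hc | hc
    · exact hbtw01 c hc ⟨hc1, hc2⟩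
    · obtain ⟨y, hy, rfl⟩ := Finset.mem_image.mp hc
      have hyX : y ∈ Xn β n := Yn_subset_Xn β n hy
      have hylt : y < x0 := by linarith
      have := hmg y hyX x0 hx0m hylt
      linarith
  have hk2 : pt β (n+1) (k+2) = x1 + eps β n := by
    apply pt_succ_eq (by omega) hz2mem (by rw [hk1]; linarith)
    rw [hk1]
    rintro c hc ⟨hc1, hc2⟩
    rw [Xn_succ hβ1] at hc
    rcases Finset.mem_union.mp hc with hc | hc
    · exact hbtw12 c hc ⟨hc1, by linarith⟩
    · obtain ⟨y, hy, rfl⟩ := Finset.mem_image.mp hc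
      have hyX : y ∈ Xn β n := Yn_subset_Xn β n hy
      exact hbtw01 y hyX ⟨by linarith, by linarith⟩
  have hk3 : pt β (n+1) (k+3) = x2 := by
    have h32 : k + 3 = (k + 2) + 1 := rfl
    rw [h32]
    apply pt_succ_eq (by omega) hx2mem1 (by rw [hk2]; linarith)
    rw [hk2]
    rintro c hc ⟨hc1, hc2⟩
    rw [Xn_succ hβ1] at hc
    rcases Finset.mem_union.mp hc with hc | hc
    · exact hbtw12 c hc ⟨by linarith, hc2⟩
    · obtain ⟨y, hy, rfl⟩ := Finset.mem_image.mp hc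
      have hyX : y ∈ Xn β n := Yn_subset_Xn β n hy
      exact hbtw12 y hyX ⟨by linarith, by linarith⟩
  have hW2zero : Wn β p1 p2 n (x1 + eps β n) = 0 := by
    apply Wn_eq_zero
    intro h
    exact hbtw12 _ (Yn_subset_Xn β n h) ⟨by linarith, by linarith⟩
  have hW3zero : Wn β p1 p2 n (x2 - eps β n) = 0 := by
    apply Wn_eq_zero
    intro h
    exact hbtw12 _ (Yn_subset_Xn β n h) ⟨by linarith, by linarith⟩
  refine ⟨?_, ?_, ?_⟩
  · rw [hk1, Wn_succ hβ1, show x1 - eps β n = x0 by linarith]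
    ring
  · rw [hk2, Wn_succ hβ1, show x1 + eps β n - eps β n = x1 by ring, hW2zero]
    ring
  · rw [hk3, Wn_succ hβ1, hW3zero]
    ring

end Stmt11Aux

/-- if the labels of a triple `(x₀,x₁,x₂)` in `X_n` satisfy `w₁ = d_m`,
`w₂ = d₁`, and `(x₀,z₁,z₂,z₃)` are four consecutive points of `X_{n+1}`, then
`W_{n+1}(z₁) = p₂W_n(x₀) + p₁W_n(x₁)`, `W_{n+1}(z₂) = p₂W_n(x₁)`,
`W_{n+1}(z₃) = p₁W_n(x₂)`. -/
theorem stmt_11 (m : ℕ) (hm : 2 ≤ m) (β : ℝ) (hβ1 : 1 < β) (hβ2 : β < 2)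
    (hβ : β ^ m = ∑ j ∈ Finset.range m, β ^ j)
    (p1 p2 : ℝ) (hp1 : 0 < p1) (hp2 : 0 < p2) (hp : p1 + p2 = 1)
    (n j : ℕ) (hj : j + 2 < (Xn β n).card)
    (k : ℕ) (hk : k + 3 < (Xn β (n+1)).card)
    (hx0 : pt β (n+1) k = pt β n j)
    (hw1 : β ^ n * (pt β n (j+1) - pt β n j) = dd β m)
    (hw2 : β ^ n * (pt β n (j+2) - pt β n (j+1)) = dd β 1) :
    Wn β p1 p2 (n+1) (pt β (n+1) (k+1)) =
      p2 * Wn β p1 p2 n (pt β n j) + p1 * Wn β p1 p2 n (pt β n (j+1)) ∧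
    Wn β p1 p2 (n+1) (pt β (n+1) (k+2)) = p2 * Wn β p1 p2 n (pt β n (j+1)) ∧
    Wn β p1 p2 (n+1) (pt β (n+1) (k+3)) = p1 * Wn β p1 p2 n (pt β n (j+2)) :=
  Stmt11Aux.main m hm hβ1 hβ2 hβ p1 p2 hp1 hp2 hp n j hj k hk hx0 hw1 hw2
end
end

section
/- For every j with 1 ≤ j ≤ m, one has d_j = ∑_{i=1}^{m−j} β^{−i} + ∑_{i=m−j+2}^{m} β^{−i} (where an empty sum is 0); in particular d₁ = ∑_{i=1}^{m−1} β^{−i} = β − 1. Moreover 1 = d₀ > d₁ > d₂ > ⋯ > d_m > 0. -/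
open MeasureTheory

noncomputable section

/-- for `1 ≤ j ≤ m`, `d_j = ∑_{i=1}^{m-j} β^{-i} + ∑_{i=m-j+2}^{m} β^{-i}`;
in particular `d₁ = ∑_{i=1}^{m-1} β^{-i} = β - 1`; and `1 = d₀ > d₁ > ⋯ > d_m > 0`. -/
theorem stmt_14 (m : ℕ) (hm : 2 ≤ m) (β : ℝ) (hβ1 : 1 < β) (hβ2 : β < 2)
    (hβ : β ^ m = ∑ j ∈ Finset.range m, β ^ j) :
    (∀ j, 1 ≤ j → j ≤ m →
      dd β j = ∑ i ∈ Finset.Icc 1 (m - j), (β ^ i)⁻¹ +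
               ∑ i ∈ Finset.Icc (m - j + 2) m, (β ^ i)⁻¹) ∧
    dd β 1 = ∑ i ∈ Finset.Icc 1 (m - 1), (β ^ i)⁻¹ ∧
    dd β 1 = β - 1 ∧
    dd β 0 = 1 ∧
    (∀ j, j < m → dd β (j+1) < dd β j) ∧
    0 < dd β m := by
  have hβ0 : (0:ℝ) < β := by linarith
  have hβne : β ≠ 0 := ne_of_gt hβ0
  have hβne1 : β ≠ 1 := by intro h; rw [h] at hβ1; exact lt_irrefl 1 hβ1
  have hpow : ∀ n : ℕ, (0:ℝ) < β ^ n := fun n => pow_pos hβ0 n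
  -- β^(m+1) = 2β^m - 1
  have hrec : β ^ (m+1) = 2 * β ^ m - 1 := by
    have h := geom_sum_mul β m
    rw [← hβ] at h
    have hp : β ^ (m+1) = β ^ m * β := pow_succ β m
    nlinarith [h]
  -- ∑_{i=1}^m β^{-i} = 1
  have key : ∑ i ∈ Finset.Icc 1 m, (β ^ i)⁻¹ = 1 := by
    have hinv1 : β⁻¹ ≠ 1 := by
      intro h
      apply hβne1
      have : β * β⁻¹ = β * 1 := by rw [h]
      rw [mul_inv_cancel₀ hβne, mul_one] at this
      linarith
    have h := geom_sum_Ico (x := β⁻¹) hinv1 (by omega : 1 ≤ m + 1)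
    rw [← Finset.Ico_add_one_right_eq_Icc]
    calc ∑ i ∈ Finset.Ico 1 (m+1), (β ^ i)⁻¹
        = ∑ i ∈ Finset.Ico 1 (m+1), (β⁻¹) ^ i := by
          refine Finset.sum_congr rfl fun i _ => ?_; rw [inv_pow]
      _ = ((β⁻¹) ^ (m+1) - β⁻¹ ^ 1) / (β⁻¹ - 1) := h
      _ = 1 := by
          rw [div_eq_one_iff_eq (by intro h'; exact hinv1 (by linarith [sub_eq_zero.mp h']))]
          have h2 : β ^ (m+1) ≠ 0 := ne_of_gt (hpow _)
          have h3 : β ^ m ≠ 0 := ne_of_gt (hpow _)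
          rw [inv_pow, pow_one]
          have hp : β ^ (m+1) = β ^ m * β := pow_succ β m
          field_simp
          linear_combination β * (hrec - hp)
  -- closed form
  have hclosed : ∀ j, 1 ≤ j → j ≤ m → dd β j = 1 - (β ^ (m - j + 1))⁻¹ := by
    intro j
    induction j with
    | zero => omega
    | succ k ih =>
      intro _ hk
      rcases Nat.eq_zero_or_pos k with hk0 | hk1
      · subst hk0
        have hm1 : m - 1 + 1 = m := by omega
        rw [hm1]
        show β - 1 = 1 - (β ^ m)⁻¹
        have h3 : β ^ m ≠ 0 := ne_of_gt (hpow _)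
        have hp : β ^ (m+1) = β ^ m * β := pow_succ β m
        field_simp
        nlinarith [hrec]
      · have ihk := ih hk1 (by omega)
        have hup : dd β (k+1) = β * dd β k - (β - 1) := by
          obtain ⟨l, rfl⟩ : ∃ l, k = l + 1 := ⟨k - 1, by omega⟩
          rfl
        rw [hup, ihk]
        have e1 : m - (k+1) + 1 = m - k := by omega
        rw [e1]
        have hp : β ^ (m - k + 1) = β ^ (m-k) * β := pow_succ β (m-k)
        have h3 : β ^ (m-k) ≠ 0 := ne_of_gt (hpow _)
        rw [hp]
        field_simp
        ring
  -- sum splitting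
  have hsplit : ∀ j, 1 ≤ j → j ≤ m →
      ∑ i ∈ Finset.Icc 1 (m - j), (β ^ i)⁻¹ +
      ∑ i ∈ Finset.Icc (m - j + 2) m, (β ^ i)⁻¹ = 1 - (β ^ (m - j + 1))⁻¹ := by
    intro j h1 hj
    have hIcc : ∀ a b : ℕ, Finset.Icc (a+1) b = Finset.Ioc a b := fun a b => by
      ext x; simp only [Finset.mem_Icc, Finset.mem_Ioc]; omega
    have hsing : Finset.Ioc (m-j) (m-j+1) = {m-j+1} := by
      ext x; simp only [Finset.mem_Ioc, Finset.mem_singleton]; omega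
    have c1 : (∑ i ∈ Finset.Ioc 0 (m-j), (β^i)⁻¹) + ∑ i ∈ Finset.Ioc (m-j) m, (β^i)⁻¹
        = ∑ i ∈ Finset.Ioc 0 m, (β^i)⁻¹ :=
      Finset.sum_Ioc_consecutive _ (by omega) (by omega)
    have c2 : (∑ i ∈ Finset.Ioc (m-j) (m-j+1), (β^i)⁻¹) + ∑ i ∈ Finset.Ioc (m-j+1) m, (β^i)⁻¹
        = ∑ i ∈ Finset.Ioc (m-j) m, (β^i)⁻¹ :=
      Finset.sum_Ioc_consecutive _ (by omega) (by omega)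
    have c3 : ∑ i ∈ Finset.Ioc (m-j) (m-j+1), (β^i)⁻¹ = (β ^ (m-j+1))⁻¹ := by
      rw [hsing, Finset.sum_singleton]
    have e0 : Finset.Icc 1 (m-j) = Finset.Ioc 0 (m-j) := hIcc 0 (m-j)
    have e2 : Finset.Icc (m-j+2) m = Finset.Ioc (m-j+1) m := hIcc (m-j+1) m
    have ekey : ∑ i ∈ Finset.Ioc 0 m, (β^i)⁻¹ = 1 := by
      rw [← hIcc 0 m]; exact key
    rw [e0, e2]
    linarith [c1, c2, c3, ekey]
  refine ⟨?_, ?_, rfl, rfl, ?_, ?_⟩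
  · intro j h1 hj
    rw [hclosed j h1 hj, hsplit j h1 hj]
  · have hA : dd β 1 = 1 - (β ^ (m - 1 + 1))⁻¹ := hclosed 1 le_rfl (by omega)
    have hempty : Finset.Icc (m-1+2) m = ∅ := Finset.Icc_eq_empty (by omega)
    have := hsplit 1 le_rfl (by omega)
    rw [hempty, Finset.sum_empty, add_zero] at this
    rw [hA, this]
  · intro j hj
    rcases Nat.eq_zero_or_pos j with rfl | hj1
    · show β - 1 < (1:ℝ)
      linarith
    · rw [hclosed (j+1) (by omega) (by omega), hclosed j hj1 (by omega)]
      have e1 : m - (j+1) + 1 = m - j := by omega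
      rw [e1]
      have hlt : β ^ (m - j) < β ^ (m - j + 1) := by
        apply pow_lt_pow_right₀ hβ1 (by omega)
      have := inv_strictAnti₀ (hpow (m-j)) hlt
      linarith
  · rw [hclosed m (by omega) le_rfl]
    have e1 : m - m + 1 = 1 := by omega
    rw [e1, pow_one]
    have : β⁻¹ < 1 := inv_lt_one_of_one_lt₀ hβ1
    linarith
end
end

section
/- Let m ≥ 2, let 0 < p₁, p₂ with p₁ + p₂ = 1, and let M₁ and M₂ be the 3×3 real matrices M₁ = [[p₂,0,0],[0,p₁,0],[0,p₂,0]] and M₂ = [[p₂,p₁,0],[0,p₂,0],[0,0,p₁]]. Then M₂·M₁^{m−1} = [[p₂^m, p₁^m, 0],[0, p₁^{m−1}p₂, 0],[0, p₁^{m−1}p₂, 0]], and for every k ≥ 1, (M₂·M₁^{m−1})^k = [[p₂^{km}, ∑_{i=0}^{k−1} p₁^{m+(m−1)i}·p₂^{km−m−(m−1)i}, 0],[0, p₁^{k(m−1)}·p₂^{k}, 0],[0, p₁^{k(m−1)}·p₂^{k}, 0]]. -/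
open MeasureTheory

noncomputable section

/-- the product formula for `M₂·M₁^{m-1}` and its powers. -/
theorem stmt_15 (m : ℕ) (hm : 2 ≤ m) (p1 p2 : ℝ) (hp1 : 0 < p1) (hp2 : 0 < p2)
    (hp : p1 + p2 = 1)
    (M1 M2 : Matrix (Fin 3) (Fin 3) ℝ)
    (hM1 : M1 = !![p2, 0, 0; 0, p1, 0; 0, p2, 0])
    (hM2 : M2 = !![p2, p1, 0; 0, p2, 0; 0, 0, p1]) :
    M2 * M1 ^ (m - 1) =
      !![p2 ^ m, p1 ^ m, 0; 0, p1 ^ (m-1) * p2, 0; 0, p1 ^ (m-1) * p2, 0] ∧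
    ∀ k : ℕ, 1 ≤ k →
      (M2 * M1 ^ (m - 1)) ^ k =
        !![p2 ^ (k*m),
            ∑ i ∈ Finset.range k, p1 ^ (m + (m-1)*i) * p2 ^ (k*m - m - (m-1)*i), 0;
           0, p1 ^ (k*(m-1)) * p2 ^ k, 0;
           0, p1 ^ (k*(m-1)) * p2 ^ k, 0] := by
  subst hM1 hM2
  obtain ⟨n, rfl⟩ : ∃ n, m = n + 2 := ⟨m - 2, by omega⟩
  have hM1pow : ∀ j : ℕ, (!![p2,0,0;0,p1,0;0,p2,0] : Matrix (Fin 3) (Fin 3) ℝ) ^ (j+1) =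
      !![p2^(j+1),0,0;0,p1^(j+1),0;0,p1^j*p2,0] := by
    intro j
    induction j with
    | zero => norm_num
    | succ j ih =>
      rw [pow_succ, ih, Matrix.mul_fin_three]
      norm_num [pow_succ]
      ring_nf
  have hsub : n + 2 - 1 = n + 1 := by omega
  have h1 : (!![p2,p1,0;0,p2,0;0,0,p1] : Matrix (Fin 3) (Fin 3) ℝ) *
      !![p2,0,0;0,p1,0;0,p2,0] ^ (n + 2 - 1) =
      !![p2 ^ (n+2), p1 ^ (n+2), 0; 0, p1 ^ (n+2-1) * p2, 0; 0, p1 ^ (n+2-1) * p2, 0] := by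
    rw [hsub, hM1pow n, Matrix.mul_fin_three]
    norm_num [pow_succ]
    ring_nf
    simp
  refine ⟨h1, ?_⟩
  intro k hk
  induction k with
  | zero => omega
  | succ k ih =>
    rcases Nat.eq_zero_or_pos k with rfl | hk'
    · rw [pow_one, h1]
      congr 1
      simp [hsub]
    · rw [pow_succ, ih hk', h1, Matrix.mul_fin_three]
      have e00 : p2 ^ (k * (n+2)) * p2 ^ (n+2) = p2 ^ ((k+1)*(n+2)) := by
        rw [← pow_add]; ring_nf
      have e11 : p1 ^ (k*(n+2-1)) * p2 ^ k * (p1 ^ (n+2-1) * p2) =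
          p1 ^ ((k+1)*(n+2-1)) * p2 ^ (k+1) := by
        rw [hsub]
        rw [show (k+1)*(n+1) = k*(n+1) + (n+1) by ring, pow_add, pow_succ]
        ring
      have e01 : p2 ^ (k*(n+2)) * p1 ^ (n+2) +
          (∑ i ∈ Finset.range k, p1 ^ ((n+2) + (n+2-1)*i) * p2 ^ (k*(n+2) - (n+2) - (n+2-1)*i))
            * (p1 ^ (n+2-1) * p2) =
          ∑ i ∈ Finset.range (k+1),
            p1 ^ ((n+2) + (n+2-1)*i) * p2 ^ ((k+1)*(n+2) - (n+2) - (n+2-1)*i) := by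
        rw [Finset.sum_range_succ', Finset.sum_mul]
        have h0 : (n+2) + (n+2-1)*0 = n+2 := by omega
        have h0' : (k+1)*(n+2) - (n+2) - (n+2-1)*0 = k*(n+2) := by
          simp; ring_nf; omega
        rw [h0, h0']
        have hterm : ∀ i ∈ Finset.range k,
            p1 ^ ((n+2) + (n+2-1)*i) * p2 ^ (k*(n+2) - (n+2) - (n+2-1)*i) * (p1 ^ (n+2-1) * p2) =
            p1 ^ ((n+2) + (n+2-1)*(i+1)) * p2 ^ ((k+1)*(n+2) - (n+2) - (n+2-1)*(i+1)) := by
          intro i hi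
          simp only [Finset.mem_range] at hi
          obtain ⟨j, rfl⟩ : ∃ j, k = i+1+j := ⟨k-1-i, by omega⟩
          simp only [hsub]
          have hA : (n+2) + (n+1)*(i+1) = ((n+2) + (n+1)*i) + (n+1) := by ring
          have hB : ((i+1+j)+1)*(n+2) - (n+2) - (n+1)*(i+1) =
              ((i+1+j)*(n+2) - (n+2) - (n+1)*i) + 1 := by
            have e1 : (i+1+j)*(n+2) = (n+2) + (n+1)*i + ((n+2)*j + i) := by ring
            have e2 : ((i+1+j)+1)*(n+2) = (n+2) + (n+1)*(i+1) + ((n+2)*j + i + 1) := by ring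
            omega
          rw [hA, hB, pow_add, pow_add]
          ring
        rw [Finset.sum_congr rfl hterm]
        ring
      rw [e00, e11, e01]
      norm_num
end
end

section
/- For every n ≥ 1, in the word σ^n(d₀), at least one of any two consecutive letters equals d₁; that is, if u₁u₂⋯u_N = σ^n(d₀), then for every 1 ≤ j ≤ N − 1, u_j = d₁ or u_{j+1} = d₁. Moreover, d₁ + d_i > 1 for every 1 ≤ i ≤ m − 1. -/
open MeasureTheory

noncomputable section

lemma pair_aux (d1 : ℝ) (σ : ℝ → List ℝ) (G : ℝ → Prop)
    (hG : ∀ x, G x → ∃ t, σ x = d1 :: t ∧ (t = [] ∨ ∃ y, t = [y] ∧ G y)) :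
    ∀ w : List ℝ, (∀ y ∈ w, G y) →
      (∀ j, j + 1 < (w.flatMap σ).length →
        (w.flatMap σ).getD j 0 = d1 ∨ (w.flatMap σ).getD (j+1) 0 = d1) ∧
      (w ≠ [] → (w.flatMap σ).getD 0 0 = d1) := by
  intro w
  induction w with
  | nil =>
    intro _
    refine ⟨?_, ?_⟩
    · intro j hj; simp at hj
    · intro h; exact absurd rfl h
  | cons x w ih =>
    intro hw
    obtain ⟨t, hσx, ht⟩ := hG x (hw x List.mem_cons_self)
    have hM := ih (fun y hy => hw y (List.mem_cons_of_mem _ hy))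
    have hflat : (x :: w).flatMap σ = d1 :: (t ++ w.flatMap σ) := by
      rw [List.flatMap_cons, hσx]; rfl
    refine ⟨?_, ?_⟩
    · intro j hj
      rcases ht with rfl | ⟨y, rfl, hy⟩
      · rw [hflat] at hj ⊢
        simp only [List.nil_append] at hj ⊢
        match j with
        | 0 => left; simp
        | Nat.succ k =>
          simp only [List.getD_cons_succ]
          apply hM.1
          simp only [List.length_cons] at hj
          omega
      · rw [hflat] at hj ⊢
        simp only [List.singleton_append] at hj ⊢
        match j with
        | 0 => left; simp
        | 1 =>
          right
          have hlen : 0 < (w.flatMap σ).length := by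
            simp only [List.length_cons] at hj; omega
          have hwne : w ≠ [] := by
            rintro rfl; simp at hlen
          simpa using hM.2 hwne
        | Nat.succ (Nat.succ k) =>
          have hk : k + 1 < (w.flatMap σ).length := by
            simp only [List.length_cons] at hj; omega
          simpa [List.getD_cons_succ] using hM.1 k hk
    · intro _; rw [hflat]; simp

lemma dd_formula (β : ℝ) : ∀ i, 1 ≤ i → dd β i = 1 + β ^ (i - 1) * (β - 2) := by
  intro i hi
  induction i with
  | zero => omega
  | succ k ih =>
    match k, ih with
    | 0, _ => simp [dd]; ring
    | k + 1, ih =>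
      have hk : dd β (k + 1) = 1 + β ^ k * (β - 2) := by simpa using ih (by omega)
      show dd β (k + 2) = 1 + β ^ (k + 1) * (β - 2)
      rw [show dd β (k+2) = β * dd β (k+1) - (β - 1) from rfl, hk]
      ring


/-- in `σ^n(d₀)` at least one of any two consecutive letters is `d₁`;
moreover `d₁ + d_i > 1` for `1 ≤ i ≤ m - 1`. -/
theorem stmt_16 (m : ℕ) (hm : 2 ≤ m) (β : ℝ) (hβ1 : 1 < β) (hβ2 : β < 2)
    (hβ : β ^ m = ∑ j ∈ Finset.range m, β ^ j)
    (σ : ℝ → List ℝ)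
    (hσ0 : σ (dd β 0) = [dd β 1, dd β 0])
    (hσi : ∀ i, 1 ≤ i → i ≤ m - 1 → σ (dd β i) = [dd β 1, dd β (i+1)])
    (hσm : σ (dd β m) = [dd β 1])
    (n : ℕ) (hn : 1 ≤ n) :
    (∀ j, j + 1 < ((fun w : List ℝ => w.flatMap σ)^[n] [dd β 0]).length →
      ((fun w : List ℝ => w.flatMap σ)^[n] [dd β 0]).getD j 0 = dd β 1 ∨
      ((fun w : List ℝ => w.flatMap σ)^[n] [dd β 0]).getD (j+1) 0 = dd β 1) ∧
    ∀ i, 1 ≤ i → i ≤ m - 1 → 1 < dd β 1 + dd β i := by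
  set G : ℝ → Prop := fun x => ∃ i, i ≤ m ∧ x = dd β i with hGdef
  have hG : ∀ x, G x → ∃ t, σ x = dd β 1 :: t ∧ (t = [] ∨ ∃ y, t = [y] ∧ G y) := by
    rintro x ⟨i, him, rfl⟩
    by_cases h0 : i = 0
    · subst h0
      exact ⟨[dd β 0], by rw [hσ0], Or.inr ⟨dd β 0, rfl, 0, by omega, rfl⟩⟩
    by_cases hmm : i = m
    · subst hmm
      exact ⟨[], by rw [hσm], Or.inl rfl⟩
    · have h1 : 1 ≤ i := by omega
      have h2 : i ≤ m - 1 := by omega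
      exact ⟨[dd β (i+1)], by rw [hσi i h1 h2],
        Or.inr ⟨dd β (i+1), rfl, i+1, by omega, rfl⟩⟩
  have allGood : ∀ k, ∀ y ∈ (fun w : List ℝ => w.flatMap σ)^[k] [dd β 0], G y := by
    intro k
    induction k with
    | zero =>
      intro y hy
      simp only [Function.iterate_zero, id, List.mem_singleton] at hy
      exact ⟨0, by omega, hy⟩
    | succ k ih =>
      intro y hy
      rw [Function.iterate_succ_apply'] at hy
      simp only [List.mem_flatMap] at hy
      obtain ⟨x, hx, hyx⟩ := hy
      obtain ⟨t, hσx, ht⟩ := hG x (ih x hx)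
      rw [hσx] at hyx
      rcases List.mem_cons.mp hyx with rfl | hyt
      · exact ⟨1, by omega, rfl⟩
      · rcases ht with rfl | ⟨z, rfl, hz⟩
        · simp at hyt
        · rw [List.mem_singleton] at hyt
          exact hyt ▸ hz
  constructor
  · obtain ⟨n', rfl⟩ : ∃ n', n = n' + 1 := ⟨n - 1, by omega⟩
    rw [Function.iterate_succ_apply']
    exact (pair_aux (dd β 1) σ G hG _ (allGood n')).1
  · -- arithmetic part
    intro i h1i him
    have hβ0 : (0:ℝ) < β := by linarith
    have hmul : (β - 1) * β ^ m = β ^ m - 1 := by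
      rw [geom_sum_eq (by intro h; rw [h] at hβ1; exact lt_irrefl 1 hβ1 : β ≠ 1),
        eq_div_iff (by intro h; apply absurd (by linarith : (1:ℝ) < β) (by nlinarith) : β - 1 ≠ 0)] at hβ
      nlinarith [hβ]
    have hone : β ^ m * (2 - β) = 1 := by nlinarith [hmul]
    have hsum : β ^ (i-1) < β ^ m - 1 := by
      have hsub : ({i - 1, m - 1} : Finset ℕ) ⊆ Finset.range m := by
        intro x hx
        simp only [Finset.mem_insert, Finset.mem_singleton] at hx
        rcases hx with rfl | rfl <;> (rw [Finset.mem_range]; omega)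
      have hne : i - 1 ≠ m - 1 := by omega
      have hle : β ^ (i-1) + β ^ (m-1) ≤ ∑ j ∈ Finset.range m, β ^ j := by
        have := Finset.sum_le_sum_of_subset_of_nonneg hsub
          (fun j _ _ => le_of_lt (pow_pos hβ0 j))
        rwa [Finset.sum_insert (by simpa using hne), Finset.sum_singleton] at this
      have hm1 : (1:ℝ) < β ^ (m-1) := one_lt_pow₀ hβ1 (by omega)
      rw [hβ]; linarith
    have hkey : β ^ (i-1) * (2 - β) < β - 1 := by
      have hpow : (0:ℝ) < β ^ m := pow_pos hβ0 m
      rw [← mul_lt_mul_iff_of_pos_right hpow]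
      calc β ^ (i-1) * (2 - β) * β ^ m = β ^ (i-1) * (β ^ m * (2 - β)) := by ring
        _ = β ^ (i-1) := by rw [hone]; ring
        _ < β ^ m - 1 := hsum
        _ = (β - 1) * β ^ m := hmul.symm
    rw [dd_formula β i h1i]
    show 1 < dd β 1 + (1 + β ^ (i-1) * (β - 2))
    have : dd β 1 = β - 1 := rfl
    rw [this]
    nlinarith [hkey]
end
end

section
/- Let m = 2 (so β is the golden ratio and D = {d₀ = 1, d₁ = 1/β, d₂ = 1/β²}), and let p₁ = p₂ = 1/2. Let n ≥ 2 and let (z₀, z₁, z₂) = (a_{n,j}, a_{n,j+1}, a_{n,j+2}) be a triple in X_n with j + 3 ≤ #X_n − 1, and set t_i = β^n(a_{n,i+1} − a_{n,i}) for i = j, j+1, j+2. If (t_j, t_{j+1}, t_{j+2}) = (d₁, d₁, d₂), then W_n(z₁) = W_n(z₀) + W_n(z₂); if (t_j, t_{j+1}, t_{j+2}) = (d₂, d₁, d₂), then W_n(z₁) = W_n(z₂). -/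
open MeasureTheory

noncomputable section

namespace S17

set_option linter.unusedSectionVars false

variable {β : ℝ}

def Vn (β : ℝ) (n : ℕ) : Finset ℝ :=
  Finset.univ.image fun I : Fin n → Fin 2 => Sapply β I 0

lemma mem_Vn {n : ℕ} {x : ℝ} : x ∈ Vn β n ↔ ∃ I : Fin n → Fin 2, Sapply β I 0 = x := by
  simp [Vn]

lemma mem_Xn {n : ℕ} {x : ℝ} : x ∈ Xn β n ↔ x ∈ Vn β n ∨ x = 1 := by
  simp [Xn, Vn, or_comm]

lemma Vn_subset_Xn {n : ℕ} {x : ℝ} (h : x ∈ Vn β n) : x ∈ Xn β n := mem_Xn.2 (Or.inl h)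

lemma Sapply_succ {n : ℕ} (I : Fin (n+1) → Fin 2) (x : ℝ) :
    Sapply β I x = Smap β (I 0) (Sapply β (fun k => I k.succ) x) := rfl

lemma Smap_eq (i : Fin 2) (x : ℝ) :
    Smap β i x = x / β + (if i = 0 then 0 else 1 - 1/β) := by
  by_cases h : i = 0 <;> simp [Smap, h]

lemma Sapply_snoc (hβ : β ≠ 0) : ∀ {n : ℕ} (J : Fin n → Fin 2) (e : Fin 2),
    Sapply β (Fin.snoc J e) 0 =
      Sapply β J 0 + (if e = 0 then 0 else (1 - 1/β) * (β⁻¹) ^ n) := by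
  intro n
  induction n with
  | zero =>
    intro J e
    have h0 : (Fin.snoc J e : Fin 1 → Fin 2) 0 = e := by
      have : (0 : Fin 1) = Fin.last 0 := rfl
      rw [this, Fin.snoc_last]
    rw [Sapply_succ]
    have hs : Sapply β (fun k : Fin 0 => (Fin.snoc J e : Fin 1 → Fin 2) k.succ) (0:ℝ) = 0 := rfl
    have hJ : Sapply β J (0:ℝ) = 0 := rfl
    rw [hs, h0, hJ, Smap_eq]
    by_cases h : e = 0 <;> simp [h]
  | succ n ih =>
    intro J e
    have h0 : (Fin.snoc J e : Fin (n+2) → Fin 2) 0 = J 0 := by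
      have : (0 : Fin (n+2)) = Fin.castSucc 0 := rfl
      rw [this, Fin.snoc_castSucc]
    have htail : (fun k : Fin (n+1) => (Fin.snoc J e : Fin (n+2) → Fin 2) k.succ)
        = Fin.snoc (fun k : Fin n => J k.succ) e := by
      funext k
      refine Fin.lastCases ?_ ?_ k
      · rw [Fin.succ_last, Fin.snoc_last, Fin.snoc_last]
      · intro i
        rw [Fin.succ_castSucc, Fin.snoc_castSucc, Fin.snoc_castSucc]
    rw [Sapply_succ, h0, htail, ih, Sapply_succ, Smap_eq, Smap_eq]
    by_cases h : e = 0 <;> simp [h] <;> ring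

lemma mem_Vn_succ (hβ : β ≠ 0) {n : ℕ} {x : ℝ} :
    x ∈ Vn β (n+1) ↔ x ∈ Vn β n ∨ x - (1 - 1/β) * (β⁻¹) ^ n ∈ Vn β n := by
  constructor
  · intro hx
    obtain ⟨I, hI⟩ := mem_Vn.1 hx
    have hdec := Sapply_snoc hβ (Fin.init I) (I (Fin.last n))
    rw [Fin.snoc_init_self] at hdec
    by_cases he : I (Fin.last n) = 0
    · left
      exact mem_Vn.2 ⟨Fin.init I, by rw [← hI, hdec]; simp [he]⟩
    · right
      exact mem_Vn.2 ⟨Fin.init I, by rw [← hI, hdec]; simp [he]⟩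
  · rintro (hx | hx)
    · obtain ⟨J, hJ⟩ := mem_Vn.1 hx
      exact mem_Vn.2 ⟨Fin.snoc J 0, by rw [Sapply_snoc hβ]; simp [hJ]⟩
    · obtain ⟨J, hJ⟩ := mem_Vn.1 hx
      refine mem_Vn.2 ⟨Fin.snoc J 1, ?_⟩
      rw [Sapply_snoc hβ, hJ]
      norm_num


def snocEquiv (n : ℕ) : ((Fin n → Fin 2) × Fin 2) ≃ (Fin (n+1) → Fin 2) :=
  { toFun := fun p => Fin.snoc p.1 p.2
    invFun := fun I => (Fin.init I, I (Fin.last n))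
    left_inv := fun p => by simp [Fin.init_snoc, Fin.snoc_last]
    right_inv := fun I => Fin.snoc_init_self I }

@[simp] lemma snocEquiv_apply (n : ℕ) (J : Fin n → Fin 2) (a : Fin 2) :
    snocEquiv n (J, a) = Fin.snoc J a := rfl

lemma Wn_succ (hβ : β ≠ 0) (p1 p2 : ℝ) (n : ℕ) (x : ℝ) :
    Wn β p1 p2 (n+1) x =
      p1 * Wn β p1 p2 n x + p2 * Wn β p1 p2 n (x - (1 - 1/β) * (β⁻¹) ^ n) := by
  set c : ℝ := (1 - 1/β) * (β⁻¹) ^ n with hc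
  have hre := Equiv.sum_comp (snocEquiv n) (fun I : Fin (n+1) → Fin 2 =>
    if Sapply β I 0 = x then ∏ k, pw p1 p2 (I k) else 0)
  unfold Wn
  rw [← hre, Fintype.sum_prod_type]
  have key : ∀ J : Fin n → Fin 2,
      (∑ a : Fin 2, if Sapply β (Fin.snoc J a) 0 = x then ∏ k, pw p1 p2 ((Fin.snoc J a : Fin (n+1) → Fin 2) k) else 0)
      = p1 * (if Sapply β J 0 = x then ∏ k, pw p1 p2 (J k) else 0)
        + p2 * (if Sapply β J 0 = x - c then ∏ k, pw p1 p2 (J k) else 0) := by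
    intro J
    have hp : ∀ a : Fin 2, (∏ k, pw p1 p2 ((Fin.snoc J a : Fin (n+1) → Fin 2) k)) = (∏ k, pw p1 p2 (J k)) * pw p1 p2 a := by
      intro a
      rw [Fin.prod_univ_castSucc]
      simp [Fin.snoc_castSucc, Fin.snoc_last]
    rw [Fin.sum_univ_two, hp 0, hp 1, Sapply_snoc hβ J 0, Sapply_snoc hβ J 1]
    simp only [if_pos (rfl : (0:Fin 2) = 0), if_neg (by decide : ¬(1:Fin 2) = 0), ite_true,
      ite_false, add_zero]
    have hcond : (Sapply β J 0 + c = x) ↔ (Sapply β J 0 = x - c) := by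
      constructor <;> intro h <;> linarith
    by_cases hA : Sapply β J 0 = x <;> by_cases hB : Sapply β J 0 = x - c
    · rw [if_pos hA, if_pos hA, if_pos (hcond.2 hB), if_pos hB]; simp [pw]; ring
    · rw [if_pos hA, if_pos hA, if_neg (fun h => hB (hcond.1 h)), if_neg hB]; simp [pw]; ring
    · rw [if_neg hA, if_neg hA, if_pos (hcond.2 hB), if_pos hB]; simp [pw]; ring
    · rw [if_neg hA, if_neg hA, if_neg (fun h => hB (hcond.1 h)), if_neg hB]; ring
  calc (∑ J : Fin n → Fin 2, ∑ a : Fin 2,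
          if Sapply β (snocEquiv n (J, a)) 0 = x then ∏ k, pw p1 p2 (snocEquiv n (J, a) k) else 0)
      = ∑ J : Fin n → Fin 2,
          (p1 * (if Sapply β J 0 = x then ∏ k, pw p1 p2 (J k) else 0)
          + p2 * (if Sapply β J 0 = x - c then ∏ k, pw p1 p2 (J k) else 0)) := by
        refine Finset.sum_congr rfl fun J _ => ?_
        simp only [snocEquiv_apply]
        exact key J
    _ = _ := by
        rw [Finset.sum_add_distrib, ← Finset.mul_sum, ← Finset.mul_sum]

section Golden
variable (hβ1 : 1 < β) (hg : β ^ 2 = β + 1)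
include hβ1 hg

lemma hb0 : (0:ℝ) < β := lt_trans one_pos hβ1
lemma hbne : β ≠ 0 := ne_of_gt (hb0 hβ1 hg)
lemma hg0 : (0:ℝ) < β⁻¹ := inv_pos.2 (hb0 hβ1 hg)
lemma hg1 : β⁻¹ < 1 := by
  rw [inv_lt_one_iff₀]; right; exact hβ1
lemma hbm1 : β - 1 = β⁻¹ := by
  have h : (β - 1) * β = 1 := by linear_combination hg
  exact eq_inv_of_mul_eq_one_left h
lemma hgsum : β⁻¹ + (β⁻¹) ^ 2 = 1 := by
  rw [← hbm1 hβ1 hg]; linear_combination hg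
lemma hcg : 1 - 1/β = (β⁻¹) ^ 2 := by
  have h := hgsum hβ1 hg
  have h2 : (1:ℝ)/β = β⁻¹ := one_div β
  linarith
lemma hpowsum (k : ℕ) : (β⁻¹) ^ (k+1) + (β⁻¹) ^ (k+2) = (β⁻¹) ^ k := by
  have h := hgsum hβ1 hg
  linear_combination ((β⁻¹) ^ k) * h
lemma powlt {a b : ℕ} (h : a < b) : (β⁻¹) ^ b < (β⁻¹) ^ a :=
  pow_lt_pow_right_of_lt_one₀ (hg0 hβ1 hg) (hg1 hβ1 hg) h
lemma powpos (a : ℕ) : (0:ℝ) < (β⁻¹) ^ a := pow_pos (hg0 hβ1 hg) a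

lemma mem_Xn_succ {n : ℕ} {x : ℝ} :
    x ∈ Xn β (n+1) ↔ x ∈ Xn β n ∨ x - (β⁻¹) ^ (n+2) ∈ Vn β n := by
  have hc : (1 - 1/β) * (β⁻¹) ^ n = (β⁻¹) ^ (n+2) := by
    rw [hcg hβ1 hg]; ring
  rw [mem_Xn, mem_Vn_succ (hbne hβ1 hg), hc, mem_Xn]
  tauto

lemma Vn_mono {n : ℕ} {x : ℝ} (h : x ∈ Vn β n) : x ∈ Vn β (n+1) :=
  (mem_Vn_succ (hbne hβ1 hg)).2 (Or.inl h)

lemma Xn_mono {n : ℕ} {x : ℝ} (h : x ∈ Xn β n) : x ∈ Xn β (n+1) :=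
  (mem_Xn_succ hβ1 hg).2 (Or.inl h)

lemma Dlem : ∀ (n : ℕ) {x y : ℝ}, x ∈ Xn β n → y ∈ Xn β n → x < y →
    y - x < (β⁻¹) ^ n → y - x = (β⁻¹) ^ (n+1) ∨ y - x = (β⁻¹) ^ (n+2) := by
  intro n
  induction n with
  | zero =>
    intro x y hx hy hlt hsm
    exfalso
    have h0 : ∀ z : ℝ, z ∈ Xn β 0 → z = 0 ∨ z = 1 := by
      intro z hz
      rcases mem_Xn.1 hz with h | h
      · left
        obtain ⟨I, hI⟩ := mem_Vn.1 h
        exact hI ▸ rfl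
      · right; exact h
    rw [pow_zero] at hsm
    rcases h0 x hx with rfl | rfl <;> rcases h0 y hy with rfl | rfl <;> linarith
  | succ n ih =>
    intro x y hx hy hlt hsm
    have P := powpos hβ1 hg
    have P2 : (0:ℝ) < (β⁻¹) ^ (n+2) := P (n+2)
    have P3 : (0:ℝ) < (β⁻¹) ^ (n+3) := P (n+3)
    have P4 : (0:ℝ) < (β⁻¹) ^ (n+4) := P (n+4)
    have hp1 := hpowsum hβ1 hg n
    have hp2 : (β⁻¹:ℝ) ^ (n+2) + (β⁻¹) ^ (n+3) = (β⁻¹) ^ (n+1) := hpowsum hβ1 hg (n+1)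
    have hp3 : (β⁻¹:ℝ) ^ (n+3) + (β⁻¹) ^ (n+4) = (β⁻¹) ^ (n+2) := hpowsum hβ1 hg (n+2)
    have hlt12 : (β⁻¹ : ℝ) ^ (n+2) < (β⁻¹) ^ (n+1) := powlt hβ1 hg (by omega)
    have hlt01 : (β⁻¹ : ℝ) ^ (n+1) < (β⁻¹) ^ n := powlt hβ1 hg (by omega)
    rcases (mem_Xn_succ hβ1 hg).1 hx with hx | hx <;>
      rcases (mem_Xn_succ hβ1 hg).1 hy with hy | hy
    · -- both old
      rcases ih hx hy hlt (by linarith) with h | h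
      · exfalso; linarith
      · left; exact h
    · -- x old, y new
      obtain ⟨v, hv⟩ : ∃ v, v = y - (β⁻¹) ^ (n+2) := ⟨_, rfl⟩
      rw [← hv] at hy
      have hvX : v ∈ Xn β n := Vn_subset_Xn hy
      rcases lt_trichotomy x v with hxy | hxy | hxy
      · -- x < v
        exfalso
        by_cases hs : v - x < (β⁻¹) ^ n
        · rcases ih hx hvX hxy hs with h | h <;> linarith
        · linarith
      · left; linarith
      · -- v < x
        exfalso
        by_cases hs : x - v < (β⁻¹) ^ n
        · rcases ih hvX hx hxy hs with h | h <;> linarith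
        · linarith
    · -- x new, y old
      obtain ⟨v, hv⟩ : ∃ v, v = x - (β⁻¹) ^ (n+2) := ⟨_, rfl⟩
      rw [← hv] at hx
      have hvX : v ∈ Xn β n := Vn_subset_Xn hx
      have hvy : v < y := by linarith
      have hs : y - v < (β⁻¹) ^ n := by linarith
      rcases ih hvX hy hvy hs with h | h
      · right; linarith
      · exfalso; linarith
    · -- both new
      have hvX : x - (β⁻¹) ^ (n+2) ∈ Xn β n := Vn_subset_Xn hx
      have hwX : y - (β⁻¹) ^ (n+2) ∈ Xn β n := Vn_subset_Xn hy
      have h1 : x - (β⁻¹) ^ (n+2) < y - (β⁻¹) ^ (n+2) := by linarith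
      have h2 : (y - (β⁻¹) ^ (n+2)) - (x - (β⁻¹) ^ (n+2)) < (β⁻¹) ^ n := by linarith
      rcases ih hvX hwX h1 h2 with h | h
      · exfalso; linarith
      · left; linarith

lemma sep (n : ℕ) {x y : ℝ} (hx : x ∈ Xn β n) (hy : y ∈ Xn β n) (hxy : x < y) :
    (β⁻¹) ^ (n+2) ≤ y - x := by
  by_cases h : y - x < (β⁻¹) ^ n
  · rcases Dlem hβ1 hg n hx hy hxy h with h | h
    · linarith [powlt hβ1 hg (show n+1 < n+2 by omega)]
    · linarith
  · linarith [powlt hβ1 hg (show n < n + 2 by omega)]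

lemma L2 (k : ℕ) {a : ℝ} (h0 : a ∈ Xn β k) (h2 : a + 2 * (β⁻¹) ^ (k+2) ∈ Xn β k) : False := by
  have P := powpos hβ1 hg
  have P2 : (0:ℝ) < (β⁻¹) ^ (k+2) := P (k+2)
  have P3 : (0:ℝ) < (β⁻¹) ^ (k+3) := P (k+3)
  have hp1 := hpowsum hβ1 hg k
  have hp2 : (β⁻¹:ℝ) ^ (k+2) + (β⁻¹) ^ (k+3) = (β⁻¹) ^ (k+1) := hpowsum hβ1 hg (k+1)
  have hlt : a < a + 2 * (β⁻¹) ^ (k+2) := by linarith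
  have hsm : (a + 2 * (β⁻¹) ^ (k+2)) - a < (β⁻¹) ^ k := by linarith
  rcases Dlem hβ1 hg k h0 h2 hlt hsm with h | h
  · have := powlt hβ1 hg (show k+2 < k+3 by omega); linarith
  · linarith [P (k+2)]

lemma L1 (k : ℕ) {x : ℝ} (hx : x ∈ Xn β (k+1)) (hx' : x + (β⁻¹) ^ (k+2) ∈ Xn β k) :
    x ∈ Xn β k := by
  rcases (mem_Xn_succ hβ1 hg).1 hx with h | h
  · exact h
  · exfalso
    have hvX : x - (β⁻¹) ^ (k+2) ∈ Xn β k := Vn_subset_Xn h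
    have : (x - (β⁻¹) ^ (k+2)) + 2 * (β⁻¹) ^ (k+2) = x + (β⁻¹) ^ (k+2) := by ring
    exact L2 hβ1 hg k hvX (by rw [this]; exact hx')

lemma no4AP (k : ℕ) {a : ℝ} (h0 : a ∈ Xn β (k+1)) (h1 : a + (β⁻¹) ^ (k+2) ∈ Xn β (k+1))
    (h2 : a + 2 * (β⁻¹) ^ (k+2) ∈ Xn β (k+1)) (h3 : a + 3 * (β⁻¹) ^ (k+2) ∈ Xn β (k+1)) :
    False := by
  set c : ℝ := (β⁻¹) ^ (k+2) with hc
  rcases (mem_Xn_succ hβ1 hg).1 h2 with c2 | c2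
  · have t1 : a + c ∈ Xn β k := by
      have e : (a + c) + c = a + 2 * c := by ring
      exact L1 hβ1 hg k h1 (by rw [e]; exact c2)
    have t0 : a ∈ Xn β k := L1 hβ1 hg k h0 t1
    exact L2 hβ1 hg k t0 c2
  · have e : a + 2 * c - c = a + c := by ring
    rw [e] at c2
    have t1 : a + c ∈ Xn β k := Vn_subset_Xn c2
    have t0 : a ∈ Xn β k := L1 hβ1 hg k h0 t1
    have t2 : a + 2 * c ∈ Xn β k := by
      rcases (mem_Xn_succ hβ1 hg).1 h3 with c3 | c3
      · have e3 : (a + 2*c) + c = a + 3 * c := by ring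
        exact L1 hβ1 hg k h2 (by rw [e3]; exact c3)
      · have e3 : a + 3 * c - c = a + 2 * c := by ring
        rw [e3] at c3
        exact Vn_subset_Xn c3
    exact L2 hβ1 hg k t0 t2

lemma newpt (k : ℕ) {z : ℝ} (hz : z ∈ Xn β k) (hu : z + (β⁻¹) ^ (k+3) ∈ Xn β (k+1)) :
    False := by
  have P := powpos hβ1 hg
  have P3 : (0:ℝ) < (β⁻¹) ^ (k+3) := P (k+3)
  have P4 : (0:ℝ) < (β⁻¹) ^ (k+4) := P (k+4)
  rcases (mem_Xn_succ hβ1 hg).1 hu with c | c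
  · have := sep hβ1 hg k hz c (by linarith)
    linarith [powlt hβ1 hg (show k+2 < k+3 by omega)]
  · have hp := hpowsum hβ1 hg (k+2)
    have e : z + (β⁻¹) ^ (k+3) - (β⁻¹) ^ (k+2) = z - (β⁻¹) ^ (k+4) := by linarith
    rw [e] at c
    have hvX : z - (β⁻¹) ^ (k+4) ∈ Xn β k := Vn_subset_Xn c
    have := sep hβ1 hg k hvX hz (by linarith)
    linarith [powlt hβ1 hg (show k+2 < k+4 by omega)]

end Golden



section Main
variable (hβ1 : 1 < β) (hg : β ^ 2 = β + 1)
include hβ1 hg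

lemma Wn_zero {p1 p2 : ℝ} {n : ℕ} {x : ℝ} (h : x ∉ Vn β n) : Wn β p1 p2 n x = 0 := by
  refine Finset.sum_eq_zero fun I _ => ?_
  exact if_neg (fun hI => h (mem_Vn.2 ⟨I, hI⟩))

lemma Wnr (k : ℕ) (x : ℝ) :
    Wn β (1/2) (1/2) (k+1) x =
      (1/2) * Wn β (1/2) (1/2) k x + (1/2) * Wn β (1/2) (1/2) k (x - (β⁻¹) ^ (k+2)) := by
  have hc : (1 - 1/β) * (β⁻¹) ^ k = (β⁻¹) ^ (k+2) := by rw [hcg hβ1 hg]; ring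
  rw [Wn_succ (hbne hβ1 hg), hc]

lemma pat1 (k : ℕ) {z0 z1 z2 z3 : ℝ}
    (h0 : z0 ∈ Xn β (k+1)) (h1 : z1 ∈ Xn β (k+1)) (h2 : z2 ∈ Xn β (k+1))
    (h3 : z3 ∈ Xn β (k+1))
    (e1 : z1 = z0 + (β⁻¹) ^ (k+2)) (e2 : z2 = z1 + (β⁻¹) ^ (k+2))
    (e3 : z3 = z2 + (β⁻¹) ^ (k+3)) :
    Wn β (1/2) (1/2) (k+1) z1 = Wn β (1/2) (1/2) (k+1) z0 + Wn β (1/2) (1/2) (k+1) z2 := by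
  have A1 : Wn β (1/2) (1/2) k (z0 - (β⁻¹) ^ (k+2)) = 0 := by
    refine Wn_zero hβ1 hg fun hw => ?_
    have haX : z0 - (β⁻¹) ^ (k+2) ∈ Xn β (k+1) :=
      Xn_mono hβ1 hg (Vn_subset_Xn hw)
    refine no4AP hβ1 hg k haX ?_ ?_ ?_
    · have e : z0 - (β⁻¹) ^ (k+2) + (β⁻¹) ^ (k+2) = z0 := by ring
      rw [e]; exact h0
    · have e : z0 - (β⁻¹) ^ (k+2) + 2 * (β⁻¹) ^ (k+2) = z1 := by rw [e1]; ring
      rw [e]; exact h1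
    · have e : z0 - (β⁻¹) ^ (k+2) + 3 * (β⁻¹) ^ (k+2) = z2 := by rw [e2, e1]; ring
      rw [e]; exact h2
  have A2 : Wn β (1/2) (1/2) k z2 = 0 := by
    refine Wn_zero hβ1 hg fun hw => ?_
    exact newpt hβ1 hg k (Vn_subset_Xn hw) (by rw [← e3]; exact h3)
  have r1 : z1 - (β⁻¹) ^ (k+2) = z0 := by rw [e1]; ring
  have r2 : z2 - (β⁻¹) ^ (k+2) = z1 := by rw [e2]; ring
  rw [Wnr hβ1 hg k z1, Wnr hβ1 hg k z0, Wnr hβ1 hg k z2, A2, r1, r2, A1]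
  ring

lemma pat2 (k : ℕ) {z0 z1 z2 z3 : ℝ}
    (h0 : z0 ∈ Xn β (k+1)) (h1 : z1 ∈ Xn β (k+1)) (h2 : z2 ∈ Xn β (k+1))
    (h3 : z3 ∈ Xn β (k+1))
    (e1 : z1 = z0 + (β⁻¹) ^ (k+3)) (e2 : z2 = z1 + (β⁻¹) ^ (k+2))
    (e3 : z3 = z2 + (β⁻¹) ^ (k+3)) :
    Wn β (1/2) (1/2) (k+1) z1 = Wn β (1/2) (1/2) (k+1) z2 := by
  have hp : (β⁻¹:ℝ) ^ (k+3) + (β⁻¹) ^ (k+4) = (β⁻¹) ^ (k+2) := hpowsum hβ1 hg (k+2)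
  have P4 : (0:ℝ) < (β⁻¹) ^ (k+4) := powpos hβ1 hg (k+4)
  have hlt34 : (β⁻¹:ℝ) ^ (k+4) < (β⁻¹) ^ (k+3) := powlt hβ1 hg (by omega)
  have B1 : Wn β (1/2) (1/2) k (z1 - (β⁻¹) ^ (k+2)) = 0 := by
    have e : z1 - (β⁻¹) ^ (k+2) = z0 - (β⁻¹) ^ (k+4) := by rw [e1]; linarith
    rw [e]
    refine Wn_zero hβ1 hg fun hw => ?_
    have hwX : z0 - (β⁻¹) ^ (k+4) ∈ Xn β (k+1) := Xn_mono hβ1 hg (Vn_subset_Xn hw)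
    have := sep hβ1 hg (k+1) hwX h0 (by linarith)
    have h32 : (β⁻¹:ℝ) ^ (k+1+2) = (β⁻¹) ^ (k+3) := rfl
    linarith [h32 ▸ this]
  have B2 : Wn β (1/2) (1/2) k z2 = 0 := by
    refine Wn_zero hβ1 hg fun hw => ?_
    exact newpt hβ1 hg k (Vn_subset_Xn hw) (by rw [← e3]; exact h3)
  have r2 : z2 - (β⁻¹) ^ (k+2) = z1 := by rw [e2]; ring
  rw [Wnr hβ1 hg k z1, Wnr hβ1 hg k z2, B2, r2, B1]
  ring

end Main

lemma pt_mem {n i : ℕ} (h : i < (Xn β n).card) : pt β n i ∈ Xn β n := by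
  unfold pt
  have hlen : i < ((Xn β n).sort (· ≤ ·)).length := by
    rw [Finset.length_sort]; exact h
  rw [List.getD_eq_getElem _ _ hlen]
  exact (Finset.mem_sort _).1 (List.getElem_mem hlen)

end S17
/-- for `m = 2` (golden ratio) and `p₁ = p₂ = 1/2`: if the labels of four
consecutive points of `X_n` are `(d₁,d₁,d₂)` then `W_n(z₁) = W_n(z₀) + W_n(z₂)`;
if they are `(d₂,d₁,d₂)` then `W_n(z₁) = W_n(z₂)`. -/
theorem stmt_17 (β : ℝ) (hβ1 : 1 < β) (hβ2 : β < 2)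
    (hβ : β ^ 2 = ∑ j ∈ Finset.range 2, β ^ j)
    (n : ℕ) (hn : 2 ≤ n) (j : ℕ) (hj : j + 3 < (Xn β n).card) :
    ((β ^ n * (pt β n (j+1) - pt β n j) = dd β 1 ∧
      β ^ n * (pt β n (j+2) - pt β n (j+1)) = dd β 1 ∧
      β ^ n * (pt β n (j+3) - pt β n (j+2)) = dd β 2) →
      Wn β (1/2) (1/2) n (pt β n (j+1)) =
        Wn β (1/2) (1/2) n (pt β n j) + Wn β (1/2) (1/2) n (pt β n (j+2))) ∧
    ((β ^ n * (pt β n (j+1) - pt β n j) = dd β 2 ∧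
      β ^ n * (pt β n (j+2) - pt β n (j+1)) = dd β 1 ∧
      β ^ n * (pt β n (j+3) - pt β n (j+2)) = dd β 2) →
      Wn β (1/2) (1/2) n (pt β n (j+1)) = Wn β (1/2) (1/2) n (pt β n (j+2))) := by
  have hg : β ^ 2 = β + 1 := by
    rw [hβ]; simp [Finset.sum_range_succ]; ring
  have hbne : β ≠ 0 := S17.hbne hβ1 hg
  have hbm1 : β - 1 = β⁻¹ := S17.hbm1 hβ1 hg
  have hgsum : β⁻¹ + (β⁻¹) ^ 2 = 1 := S17.hgsum hβ1 hg
  have hdd1 : dd β 1 = β⁻¹ := by rw [show dd β 1 = β - 1 from rfl, hbm1]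
  have hdd2 : dd β 2 = (β⁻¹) ^ 2 := by
    have h2 : dd β 2 = β * (β - 1) - (β - 1) := rfl
    have hmul : β * β⁻¹ = 1 := mul_inv_cancel₀ hbne
    rw [h2, hbm1]
    linarith
  have hbn : (β:ℝ) ^ n ≠ 0 := pow_ne_zero n hbne
  have hcan : ∀ m : ℕ, (β:ℝ) ^ n * (β⁻¹) ^ (n+m) = (β⁻¹) ^ m := by
    intro m
    rw [pow_add, ← mul_assoc, ← mul_pow, mul_inv_cancel₀ hbne, one_pow, one_mul]
  -- memberships
  have m0 : pt β n j ∈ Xn β n := S17.pt_mem (by omega)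
  have m1 : pt β n (j+1) ∈ Xn β n := S17.pt_mem (by omega)
  have m2 : pt β n (j+2) ∈ Xn β n := S17.pt_mem (by omega)
  have m3 : pt β n (j+3) ∈ Xn β n := S17.pt_mem (by omega)
  obtain ⟨k, rfl⟩ : ∃ k, n = k + 1 := ⟨n - 1, by omega⟩
  have hg1 : ∀ {a b : ℝ}, β ^ (k+1) * (b - a) = dd β 1 → b = a + (β⁻¹) ^ (k+2) := by
    intro a b h
    rw [hdd1] at h
    have h2 : (β:ℝ) ^ (k+1) * (β⁻¹) ^ (k+1+1) = β⁻¹ := by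
      have := hcan 1; rw [pow_one] at this; exact this
    have := mul_left_cancel₀ hbn (h.trans h2.symm)
    linarith
  have hg2 : ∀ {a b : ℝ}, β ^ (k+1) * (b - a) = dd β 2 → b = a + (β⁻¹) ^ (k+3) := by
    intro a b h
    rw [hdd2] at h
    have h2 : (β:ℝ) ^ (k+1) * (β⁻¹) ^ (k+1+2) = (β⁻¹) ^ 2 := hcan 2
    have := mul_left_cancel₀ hbn (h.trans h2.symm)
    linarith
  constructor
  · rintro ⟨t1, t2, t3⟩
    exact S17.pat1 hβ1 hg k m0 m1 m2 m3 (hg1 t1) (hg1 t2) (hg2 t3)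
  · rintro ⟨t1, t2, t3⟩
    exact S17.pat2 hβ1 hg k m0 m1 m2 m3 (hg2 t1) (hg1 t2) (hg2 t3)
end
end

section
/- Let 0 < p₁, p₂ with p₁ + p₂ = 1, and let M be the 3×3 real matrix M = [[p₂², p₁², 0],[0, p₁p₂, 0],[0, p₁p₂, p₁²]]. Then for every ℓ ≥ 1, M^ℓ = [[p₂^{2ℓ}, ∑_{i=2}^{ℓ+1} p₁^{i}·p₂^{2ℓ−i}, 0],[0, p₁^{ℓ}p₂^{ℓ}, 0],[0, ∑_{i=ℓ}^{2ℓ−1} p₁^{i}·p₂^{2ℓ−i}, p₁^{2ℓ}]]. -/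
open MeasureTheory

noncomputable section

lemma shift_sum' (f : ℕ → ℝ) (a b : ℕ) :
    (∑ i ∈ Finset.Icc (a+1) (b+1), f i) = ∑ i ∈ Finset.Icc a b, f (i+1) := by
  rw [← Finset.map_add_right_Icc _ _ 1, Finset.sum_map]
  rfl


/-- the power formula for `M = [[p₂²,p₁²,0],[0,p₁p₂,0],[0,p₁p₂,p₁²]]`. -/
theorem stmt_18 (p1 p2 : ℝ) (hp1 : 0 < p1) (hp2 : 0 < p2) (hp : p1 + p2 = 1)
    (M : Matrix (Fin 3) (Fin 3) ℝ)
    (hM : M = !![p2 ^ 2, p1 ^ 2, 0; 0, p1 * p2, 0; 0, p1 * p2, p1 ^ 2]) :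
    ∀ l : ℕ, 1 ≤ l →
      M ^ l =
        !![p2 ^ (2*l), ∑ i ∈ Finset.Icc 2 (l+1), p1 ^ i * p2 ^ (2*l - i), 0;
           0, p1 ^ l * p2 ^ l, 0;
           0, ∑ i ∈ Finset.Icc l (2*l - 1), p1 ^ i * p2 ^ (2*l - i), p1 ^ (2*l)] := by
  intro l hl
  induction l with
  | zero => omega
  | succ n ih =>
    rcases Nat.eq_or_lt_of_le hl with h1 | h1
    · have hn : n = 0 := by omega
      subst hn
      norm_num [pow_one, hM, Finset.Icc_self]
    · have hn : 1 ≤ n := by omega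
      have IH := ih hn
      rw [pow_succ, IH, hM, Matrix.mul_fin_three]
      ext i j
      fin_cases i <;> fin_cases j <;>
        simp [Matrix.cons_val_zero, Matrix.cons_val_one]
      · -- (0,0)
        rw [show 2*(n+1) = 2*n+2 by ring, pow_add]
      · -- (0,1)
        have hsplit : Finset.Icc 2 (n+1+1) = insert 2 (Finset.Icc 3 (n+2)) := by
          ext x; simp [Finset.mem_Icc]; omega
        rw [hsplit, Finset.sum_insert (by simp)]
        rw [show Finset.Icc 3 (n+2) = Finset.Icc (2+1) ((n+1)+1) by norm_num,
          shift_sum' (fun i => p1 ^ i * p2 ^ (2*(n+1) - i)) 2 (n+1)]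
        rw [Finset.sum_mul]
        congr 1
        · rw [show 2*(n+1)-2 = 2*n by omega]; ring
        · apply Finset.sum_congr rfl
          intro i hi
          simp only [Finset.mem_Icc] at hi
          rw [show 2*(n+1)-(i+1) = (2*n-i)+1 by omega, pow_succ, pow_succ]
          ring
      · -- (1,1)
        rw [pow_succ, pow_succ]; ring
      · -- (2,1)
        have h21 : 2*(n+1)-1 = (2*n)+1 := by omega
        rw [h21, Finset.sum_Icc_succ_top (by omega)]
        rw [show Finset.Icc (n+1) (2*n) = Finset.Icc (n+1) ((2*n-1)+1) by congr 1; omega,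
          shift_sum' (fun i => p1 ^ i * p2 ^ (2*(n+1) - i)) n (2*n-1)]
        rw [Finset.sum_mul]
        congr 1
        · apply Finset.sum_congr rfl
          intro i hi
          simp only [Finset.mem_Icc] at hi
          rw [show 2*(n+1)-(i+1) = (2*n-i)+1 by omega, pow_succ, pow_succ]
          ring
        · rw [show 2*(n+1)-(2*n+1) = 1 by omega, pow_succ]
          ring
      · -- (2,2)
        rw [show 2*(n+1) = 2*n+2 by ring, pow_add]
end
end
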